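/- arXiv:1712.03260 — 9 statements merged into one kernel-verified Lean document; each statement's English description precedes it below -/
import Mathlib

section
/- Let φ : [0,∞) → ℝ be convex and continuously differentiable with φ(0) = 0, and suppose there is a positive, nonincreasing, continuous function w : [0,∞) → ℝ with φ'(r) = r·w(r) for all r ≥ 0. Then for all vectors a, b ∈ ℝ^d one has w(|a|) · (b · (b − a)) ≥ φ(|b|) − φ(|a|) + (1/2) w(|a|) |b − a|², where · denotes the euclidean inner product and |·| the euclidean norm. -/
/-!
With `s = |a|`, the function `g r = w(s) r² / 2 - φ(r)` has derivative `r (w(s) - w(r))`, which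
changes sign from `≤ 0` to `≥ 0` at `r = s` because `w` is nonincreasing. Hence `s` minimises `g`
on `[0, ∞)`, i.e. `φ(|b|) - φ(|a|) ≤ w(|a|) (|b|² - |a|²) / 2`, and the polarisation identity
`2 b·(b - a) = |b|² - |a|² + |b - a|²` turns this into the claim.
-/

open Set RealInnerProductSpace

theorem isMinOn_of_hasDerivAt_of_sign_change {g g' : ℝ → ℝ} {D : Set ℝ} (hD : D.OrdConnected)
    {s : ℝ} (hs : s ∈ D) (hg : ∀ r ∈ D, HasDerivAt g (g' r) r)
    (hsign : ∀ r ∈ D, 0 ≤ (r - s) * g' r) : IsMinOn g D s := by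
  intro t ht
  have hcont : ∀ {x y}, x ∈ D → y ∈ D → ContinuousOn g (Icc x y) := fun hx hy r hr =>
    (hg r (hD.out hx hy hr)).continuousAt.continuousWithinAt
  have hderiv : ∀ {x y}, x ∈ D → y ∈ D → ∀ r ∈ interior (Icc x y),
      HasDerivWithinAt g (g' r) (interior (Icc x y)) r := fun hx hy r hr =>
    (hg r (hD.out hx hy (interior_subset hr))).hasDerivWithinAt
  rcases le_total s t with hst | hts
  · refine monotoneOn_of_hasDerivWithinAt_nonneg (convex_Icc s t) (hcont hs ht) (hderiv hs ht)
      (fun r hr => ?_) ⟨le_rfl, hst⟩ ⟨hst, le_rfl⟩ hst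
    rw [interior_Icc] at hr
    exact nonneg_of_mul_nonneg_right (hsign r (hD.out hs ht (Ioo_subset_Icc_self hr)))
      (sub_pos.2 hr.1)
  · refine antitoneOn_of_hasDerivWithinAt_nonpos (convex_Icc t s) (hcont ht hs) (hderiv ht hs)
      (fun r hr => ?_) ⟨le_rfl, hts⟩ ⟨hts, le_rfl⟩ hts
    rw [interior_Icc] at hr
    exact nonpos_of_mul_nonneg_right (hsign r (hD.out ht hs (Ioo_subset_Icc_self hr)))
      (sub_neg.2 hr.2)

theorem sub_le_of_hasDerivAt_mul_of_antitoneOn {φ w : ℝ → ℝ}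
    (hderiv : ∀ r ∈ Ici (0 : ℝ), HasDerivAt φ (r * w r) r) (hw : AntitoneOn w (Ici 0))
    {s t : ℝ} (hs : 0 ≤ s) (ht : 0 ≤ t) : φ t - φ s ≤ w s / 2 * (t ^ 2 - s ^ 2) := by
  have hg : ∀ r ∈ Ici (0 : ℝ),
      HasDerivAt (fun r => w s / 2 * r ^ 2 - φ r) (r * (w s - w r)) r := fun r hr => by
    refine (((hasDerivAt_pow 2 r).const_mul (w s / 2)).sub (hderiv r hr)).congr_deriv ?_
    push_cast
    ring
  have hsign : ∀ r ∈ Ici (0 : ℝ), 0 ≤ (r - s) * (r * (w s - w r)) := fun r hr => by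
    have hr : (0 : ℝ) ≤ r := hr
    have hw_sign : 0 ≤ (r - s) * (w s - w r) := by
      rcases le_total s r with hsr | hrs
      · exact mul_nonneg (sub_nonneg.2 hsr) (sub_nonneg.2 (hw hs hr hsr))
      · exact mul_nonneg_of_nonpos_of_nonpos (sub_nonpos.2 hrs) (sub_nonpos.2 (hw hr hs hrs))
    calc 0 ≤ r * ((r - s) * (w s - w r)) := mul_nonneg hr hw_sign
      _ = (r - s) * (r * (w s - w r)) := by ring
  have hmin : w s / 2 * s ^ 2 - φ s ≤ w s / 2 * t ^ 2 - φ t :=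
    isMinOn_of_hasDerivAt_of_sign_change ordConnected_Ici (mem_Ici.2 hs) hg hsign (mem_Ici.2 ht)
  linarith

theorem two_mul_inner_sub_right_self {E : Type*} [SeminormedAddCommGroup E] [InnerProductSpace ℝ E]
    (a b : E) : 2 * ⟪b, b - a⟫ = ‖b‖ ^ 2 - ‖a‖ ^ 2 + ‖b - a‖ ^ 2 := by
  rw [inner_sub_right, real_inner_self_eq_norm_sq, norm_sub_sq_real]
  ring

theorem stmt0_general (d : ℕ) (φ w : ℝ → ℝ)
    (hderiv : ∀ r ∈ Set.Ici (0:ℝ), HasDerivAt φ (r * w r) r)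
    (hwanti : AntitoneOn w (Set.Ici 0))
    (a b : EuclideanSpace ℝ (Fin d)) :
    w ‖a‖ * ⟪b, b - a⟫ ≥ φ ‖b‖ - φ ‖a‖ + (1/2) * w ‖a‖ * ‖b - a‖^2 := by
  have hφ := sub_le_of_hasDerivAt_mul_of_antitoneOn hderiv hwanti (norm_nonneg a) (norm_nonneg b)
  have hinner := congrArg (w ‖a‖ * ·) (two_mul_inner_sub_right_self a b)
  linarith

/-- Key inequality (Lemma 3.2): under conditions (C1)-(C2), with `w r = φ'(r)/r`,
for all `a, b ∈ ℝ^d` one has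
`w(|a|) b·(b−a) ≥ φ(|b|) − φ(|a|) + (1/2) w(|a|) |b−a|²`. -/
theorem stmt0 (d : ℕ) (hd : 1 ≤ d) (φ w : ℝ → ℝ)
    (hconv : ConvexOn ℝ (Set.Ici 0) φ)
    (hφ0 : φ 0 = 0)
    (hderiv : ∀ r ∈ Set.Ici (0:ℝ), HasDerivAt φ (r * w r) r)
    (hwpos : ∀ r ∈ Set.Ici (0:ℝ), 0 < w r)
    (hwanti : AntitoneOn w (Set.Ici 0))
    (hwcont : ContinuousOn w (Set.Ici 0))
    (a b : EuclideanSpace ℝ (Fin d)) :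
    w ‖a‖ * ⟪b, b - a⟫ ≥ φ ‖b‖ - φ ‖a‖ + (1/2) * w ‖a‖ * ‖b - a‖^2 :=
  stmt0_general d φ w hderiv hwanti a b
end

section
/- Energy stability of the semi-implicit scheme: Let (Ω, μ) be a measure space, d ≥ 1, τ > 0 and L ≥ 1. Let φ : [0,∞) → ℝ be convex and continuously differentiable with φ(0) = 0, and let w : [0,∞) → ℝ be positive, nonincreasing and continuous with φ'(r) = r·w(r) for all r ≥ 0. Suppose u⁰, …, u^L are in L²(μ; ℝ) and g⁰, …, g^L are in L²(μ; ℝ^d) with φ(|g^k|) integrable for each k, and suppose that for every k = 1, …, L the tested scheme identity ∫_Ω |d_t u^k|² dμ + ∫_Ω w(|g^{k-1}|) (g^k · d_t g^k) dμ = 0 holds, where d_t c^k = (c^k − c^{k-1})/τ. Then ∫_Ω φ(|g^L|) dμ + τ Σ_{k=1}^L ∫_Ω |d_t u^k|² dμ + (τ²/2) Σ_{k=1}^L ∫_Ω w(|g^{k-1}|) |d_t g^k|² dμ ≤ ∫_Ω φ(|g⁰|) dμ. -/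
/-!
Since `φ'(r) = r w(r)` with `w` nonincreasing, `ψ(r) = w(a)/2 · r² − φ(r)` has derivative
`r (w(a) − w(r))` and is therefore minimal at `r = a`, i.e. `φ(b) − φ(a) ≤ w(a)/2 · (b² − a²)`.
Taking `a = |g^{k-1}|`, `b = |g^k|` and using
`g^k · (g^k − g^{k-1}) = (|g^k|² − |g^{k-1}|² + |g^k − g^{k-1}|²) / 2`, this bounds
`φ(|g^k|) − φ(|g^{k-1}|) + (τ²/2) w(|g^{k-1}|) |d_t g^k|²` pointwise by
`τ w(|g^{k-1}|) g^k · d_t g^k`. Integrating, the tested scheme turns the right-hand side into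
`−τ ∫ |d_t u^k|²`, and summing over `k` telescopes.
-/

open RealInnerProductSpace MeasureTheory

section Majorant

variable {φ w : ℝ → ℝ} {a : ℝ}

lemma hasDerivAt_half_mul_sq_sub (hderiv : ∀ r ∈ Set.Ici (0:ℝ), HasDerivAt φ (r * w r) r)
    {r : ℝ} (hr : 0 ≤ r) :
    HasDerivAt (fun s => w a / 2 * s ^ 2 - φ s) (r * (w a - w r)) r := by
  have h := ((hasDerivAt_pow 2 r).const_mul (w a / 2)).sub (hderiv r hr)
  exact h.congr_deriv (by push_cast; ring)

lemma monotoneOn_half_mul_sq_sub (hderiv : ∀ r ∈ Set.Ici (0:ℝ), HasDerivAt φ (r * w r) r)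
    (hwanti : AntitoneOn w (Set.Ici 0)) (ha : 0 ≤ a) :
    MonotoneOn (fun s => w a / 2 * s ^ 2 - φ s) (Set.Ici a) := by
  refine monotoneOn_of_hasDerivWithinAt_nonneg (f' := fun r => r * (w a - w r)) (convex_Ici a)
    (fun r hr => (hasDerivAt_half_mul_sq_sub hderiv (ha.trans hr)).continuousAt.continuousWithinAt)
    (fun r hr => ?_) (fun r hr => ?_) <;> rw [interior_Ici] at hr
  · exact (hasDerivAt_half_mul_sq_sub hderiv (ha.trans hr.le)).hasDerivWithinAt
  · have hr0 : 0 ≤ r := ha.trans hr.le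
    exact mul_nonneg hr0 (sub_nonneg.2 (hwanti ha hr0 hr.le))

lemma antitoneOn_half_mul_sq_sub (hderiv : ∀ r ∈ Set.Ici (0:ℝ), HasDerivAt φ (r * w r) r)
    (hwanti : AntitoneOn w (Set.Ici 0)) (ha : 0 ≤ a) :
    AntitoneOn (fun s => w a / 2 * s ^ 2 - φ s) (Set.Icc 0 a) := by
  refine antitoneOn_of_hasDerivWithinAt_nonpos (f' := fun r => r * (w a - w r)) (convex_Icc 0 a)
    (fun r hr => (hasDerivAt_half_mul_sq_sub hderiv hr.1).continuousAt.continuousWithinAt)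
    (fun r hr => ?_) (fun r hr => ?_) <;> rw [interior_Icc] at hr
  · exact (hasDerivAt_half_mul_sq_sub hderiv hr.1.le).hasDerivWithinAt
  · exact mul_nonpos_of_nonneg_of_nonpos hr.1.le (sub_nonpos.2 (hwanti hr.1.le ha hr.2.le))

lemma sub_le_half_mul_sq_sub_sq (hderiv : ∀ r ∈ Set.Ici (0:ℝ), HasDerivAt φ (r * w r) r)
    (hwanti : AntitoneOn w (Set.Ici 0)) (ha : 0 ≤ a) {b : ℝ} (hb : 0 ≤ b) :
    φ b - φ a ≤ w a / 2 * (b ^ 2 - a ^ 2) := by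
  suffices w a / 2 * a ^ 2 - φ a ≤ w a / 2 * b ^ 2 - φ b by linarith
  rcases le_total a b with hab | hba
  · exact monotoneOn_half_mul_sq_sub hderiv hwanti ha Set.self_mem_Ici hab hab
  · exact antitoneOn_half_mul_sq_sub hderiv hwanti ha ⟨hb, hba⟩ ⟨ha, le_rfl⟩ hba

end Majorant

section Pointwise

variable {E : Type*} [NormedAddCommGroup E] [InnerProductSpace ℝ E] {φ w : ℝ → ℝ}

lemma le_add_mul_inner_sub (hderiv : ∀ r ∈ Set.Ici (0:ℝ), HasDerivAt φ (r * w r) r)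
    (hwanti : AntitoneOn w (Set.Ici 0)) (x y : E) :
    φ ‖y‖ + w ‖x‖ / 2 * ‖y - x‖ ^ 2 ≤ φ ‖x‖ + w ‖x‖ * ⟪y, y - x⟫ := by
  have hmaj := sub_le_half_mul_sq_sub_sq hderiv hwanti (norm_nonneg x) (norm_nonneg y)
  have hpolar : ⟪y, y - x⟫ = (‖y‖ ^ 2 - ‖x‖ ^ 2 + ‖y - x‖ ^ 2) / 2 := by
    rw [inner_sub_right, real_inner_self_eq_norm_sq, norm_sub_sq_real]
    ring
  rw [hpolar]
  linarith

lemma le_add_mul_inner_smul_sub (hderiv : ∀ r ∈ Set.Ici (0:ℝ), HasDerivAt φ (r * w r) r)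
    (hwanti : AntitoneOn w (Set.Ici 0)) {τ : ℝ} (hτ : τ ≠ 0) (x y : E) :
    φ ‖y‖ + τ ^ 2 / 2 * (w ‖x‖ * ‖(1 / τ) • (y - x)‖ ^ 2)
      ≤ φ ‖x‖ + τ * (w ‖x‖ * ⟪y, (1 / τ) • (y - x)⟫) := by
  have hsq : τ ^ 2 / 2 * (w ‖x‖ * ‖(1 / τ) • (y - x)‖ ^ 2) = w ‖x‖ / 2 * ‖y - x‖ ^ 2 := by
    rw [norm_smul, mul_pow, Real.norm_eq_abs, sq_abs]
    field_simp
  have hinner : τ * (w ‖x‖ * ⟪y, (1 / τ) • (y - x)⟫) = w ‖x‖ * ⟪y, y - x⟫ := by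
    rw [real_inner_smul_right]
    field_simp
  rw [hsq, hinner]
  exact le_add_mul_inner_sub hderiv hwanti x y

end Pointwise

section Integrability

variable {Ω : Type*} [MeasurableSpace Ω] {μ : Measure Ω} {E : Type*} [NormedAddCommGroup E]

lemma MeasureTheory.MemLp.integrable_real_inner [InnerProductSpace ℝ E] {f g : Ω → E} (hf : MemLp f 2 μ) (hg : MemLp g 2 μ) :
    Integrable (fun x => ⟪f x, g x⟫) μ :=
  (L2.integrable_inner (hf.toLp f) (hg.toLp g)).congr <| by
    filter_upwards [hf.coeFn_toLp, hg.coeFn_toLp] with x hfx hgx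
    rw [hfx, hgx]

lemma MeasureTheory.Integrable.comp_norm_mul {w : ℝ → ℝ} (hwnonneg : ∀ r ∈ Set.Ici (0:ℝ), 0 ≤ w r)
    (hwanti : AntitoneOn w (Set.Ici 0)) (hwcont : ContinuousOn w (Set.Ici 0))
    {f : Ω → E} (hf : AEStronglyMeasurable f μ) {h : Ω → ℝ} (hh : Integrable h μ) :
    Integrable (fun x => w ‖f x‖ * h x) μ := by
  have hw : Continuous fun v : E => w ‖v‖ :=
    hwcont.comp_continuous continuous_norm fun v => norm_nonneg v
  refine hh.bdd_mul (c := w 0) (hw.comp_aestronglyMeasurable hf) (.of_forall fun x => ?_)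
  have hx : ‖f x‖ ∈ Set.Ici (0:ℝ) := norm_nonneg _
  rw [Real.norm_eq_abs, abs_of_nonneg (hwnonneg _ hx)]
  exact hwanti Set.self_mem_Ici hx hx

end Integrability

lemma add_sum_Icc_le_of_forall_add_le {a b : ℕ → ℝ} {L : ℕ}
    (h : ∀ k ∈ Finset.Icc 1 L, a k + b k ≤ a (k - 1)) :
    a L + ∑ k ∈ Finset.Icc 1 L, b k ≤ a 0 := by
  induction L with
  | zero => simp
  | succ L ih =>
    rw [Finset.sum_Icc_succ_top (by omega)]
    have hlast := h (L + 1) (Finset.mem_Icc.2 ⟨by omega, le_rfl⟩)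
    have hprev := ih fun k hk => h k (Finset.Icc_subset_Icc_right (Nat.le_succ L) hk)
    simp only [Nat.add_sub_cancel] at hlast
    linarith

lemma integral_energy_step {Ω : Type*} [MeasurableSpace Ω] {μ : Measure Ω}
    {E : Type*} [NormedAddCommGroup E] [InnerProductSpace ℝ E] {φ w : ℝ → ℝ}
    (hderiv : ∀ r ∈ Set.Ici (0:ℝ), HasDerivAt φ (r * w r) r)
    (hwnonneg : ∀ r ∈ Set.Ici (0:ℝ), 0 ≤ w r)
    (hwanti : AntitoneOn w (Set.Ici 0)) (hwcont : ContinuousOn w (Set.Ici 0))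
    {τ : ℝ} (hτ : τ ≠ 0) {f₀ f₁ : Ω → E} (hf₀ : MemLp f₀ 2 μ) (hf₁ : MemLp f₁ 2 μ)
    (hφf₀ : Integrable (fun x => φ ‖f₀ x‖) μ) (hφf₁ : Integrable (fun x => φ ‖f₁ x‖) μ) :
    (∫ x, φ ‖f₁ x‖ ∂μ) + τ ^ 2 / 2 * ∫ x, w ‖f₀ x‖ * ‖(1 / τ) • (f₁ x - f₀ x)‖ ^ 2 ∂μ
      ≤ (∫ x, φ ‖f₀ x‖ ∂μ) + τ * ∫ x, w ‖f₀ x‖ * ⟪f₁ x, (1 / τ) • (f₁ x - f₀ x)⟫ ∂μ := by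
  have hdf : MemLp (fun x => (1 / τ) • (f₁ x - f₀ x)) 2 μ := (hf₁.sub hf₀).const_smul _
  have hsq : Integrable (fun x => w ‖f₀ x‖ * ‖(1 / τ) • (f₁ x - f₀ x)‖ ^ 2) μ :=
    (hdf.integrable_norm_pow two_ne_zero).comp_norm_mul hwnonneg hwanti hwcont
      hf₀.aestronglyMeasurable
  have hinner : Integrable (fun x => w ‖f₀ x‖ * ⟪f₁ x, (1 / τ) • (f₁ x - f₀ x)⟫) μ :=
    (hf₁.integrable_real_inner hdf).comp_norm_mul hwnonneg hwanti hwcont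
      hf₀.aestronglyMeasurable
  rw [← integral_const_mul, ← integral_const_mul, ← integral_add hφf₁ (hsq.const_mul _),
    ← integral_add hφf₀ (hinner.const_mul _)]
  exact integral_mono (hφf₁.add (hsq.const_mul _)) (hφf₀.add (hinner.const_mul _))
    fun x => le_add_mul_inner_smul_sub hderiv hwanti hτ (f₀ x) (f₁ x)

theorem stmt2_general {Ω : Type*} [MeasurableSpace Ω] (μ : Measure Ω)
    (d : ℕ) (τ : ℝ) (hτ : 0 < τ) (L : ℕ)
    (φ w : ℝ → ℝ)
    (hderiv : ∀ r ∈ Set.Ici (0:ℝ), HasDerivAt φ (r * w r) r)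
    (hwpos : ∀ r ∈ Set.Ici (0:ℝ), 0 < w r)
    (hwanti : AntitoneOn w (Set.Ici 0))
    (hwcont : ContinuousOn w (Set.Ici 0))
    (u : ℕ → Ω → ℝ) (g : ℕ → Ω → EuclideanSpace ℝ (Fin d))
    (hg : ∀ k ≤ L, MemLp (g k) 2 μ)
    (hφg : ∀ k ≤ L, Integrable (fun x => φ ‖g k x‖) μ)
    (hscheme : ∀ k, 1 ≤ k → k ≤ L →
      (∫ x, ((u k x - u (k-1) x) / τ)^2 ∂μ)
        + ∫ x, w ‖g (k-1) x‖ * ⟪g k x, (1/τ) • (g k x - g (k-1) x)⟫ ∂μ = 0) :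
    (∫ x, φ ‖g L x‖ ∂μ)
      + τ * ∑ k ∈ Finset.Icc 1 L, ∫ x, ((u k x - u (k-1) x) / τ)^2 ∂μ
      + (τ^2 / 2) * ∑ k ∈ Finset.Icc 1 L,
          ∫ x, w ‖g (k-1) x‖ * ‖(1/τ) • (g k x - g (k-1) x)‖^2 ∂μ
    ≤ ∫ x, φ ‖g 0 x‖ ∂μ := by
  have hstep : ∀ k ∈ Finset.Icc 1 L,
      (∫ x, φ ‖g k x‖ ∂μ) + (τ * ∫ x, ((u k x - u (k-1) x) / τ)^2 ∂μ
        + τ ^ 2 / 2 * ∫ x, w ‖g (k-1) x‖ * ‖(1/τ) • (g k x - g (k-1) x)‖^2 ∂μ)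
      ≤ ∫ x, φ ‖g (k-1) x‖ ∂μ := by
    intro k hk
    obtain ⟨hk1, hkL⟩ := Finset.mem_Icc.1 hk
    have hk1L : k - 1 ≤ L := (Nat.sub_le k 1).trans hkL
    have h := integral_energy_step hderiv (fun r hr => (hwpos r hr).le) hwanti hwcont hτ.ne'
      (hg (k-1) hk1L) (hg k hkL) (hφg (k-1) hk1L) (hφg k hkL)
    linear_combination h + τ * hscheme k hk1 hkL
  have := add_sum_Icc_le_of_forall_add_le hstep
  rwa [Finset.sum_add_distrib, ← Finset.mul_sum, ← Finset.mul_sum, ← add_assoc] at this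

/-- Energy stability of the semi-implicit scheme (Proposition 3.3): if the tested
scheme identity `∫ |d_t u^k|² + ∫ w(|g^{k-1}|) g^k · d_t g^k = 0` holds for
`k = 1, …, L`, then
`∫ φ(|g^L|) + τ ∑ ∫ |d_t u^k|² + (τ²/2) ∑ ∫ w(|g^{k-1}|)|d_t g^k|² ≤ ∫ φ(|g⁰|)`. -/
theorem stmt2 {Ω : Type*} [MeasurableSpace Ω] (μ : Measure Ω)
    (d : ℕ) (hd : 1 ≤ d) (τ : ℝ) (hτ : 0 < τ) (L : ℕ) (hL : 1 ≤ L)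
    (φ w : ℝ → ℝ)
    (hconv : ConvexOn ℝ (Set.Ici 0) φ)
    (hφ0 : φ 0 = 0)
    (hderiv : ∀ r ∈ Set.Ici (0:ℝ), HasDerivAt φ (r * w r) r)
    (hwpos : ∀ r ∈ Set.Ici (0:ℝ), 0 < w r)
    (hwanti : AntitoneOn w (Set.Ici 0))
    (hwcont : ContinuousOn w (Set.Ici 0))
    (u : ℕ → Ω → ℝ) (g : ℕ → Ω → EuclideanSpace ℝ (Fin d))
    (hu : ∀ k ≤ L, MemLp (u k) 2 μ)
    (hg : ∀ k ≤ L, MemLp (g k) 2 μ)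
    (hφg : ∀ k ≤ L, Integrable (fun x => φ ‖g k x‖) μ)
    (hscheme : ∀ k, 1 ≤ k → k ≤ L →
      (∫ x, ((u k x - u (k-1) x) / τ)^2 ∂μ)
        + ∫ x, w ‖g (k-1) x‖ * ⟪g k x, (1/τ) • (g k x - g (k-1) x)⟫ ∂μ = 0) :
    (∫ x, φ ‖g L x‖ ∂μ)
      + τ * ∑ k ∈ Finset.Icc 1 L, ∫ x, ((u k x - u (k-1) x) / τ)^2 ∂μ
      + (τ^2 / 2) * ∑ k ∈ Finset.Icc 1 L,
          ∫ x, w ‖g (k-1) x‖ * ‖(1/τ) • (g k x - g (k-1) x)‖^2 ∂μ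
    ≤ ∫ x, φ ‖g 0 x‖ ∂μ :=
  stmt2_general μ d τ hτ L φ w hderiv hwpos hwanti hwcont u g hg hφg hscheme
end

section
/- Error estimate between implicit and semi-implicit iterates for the regularized total variation flow: Let (Ω, μ) be a measure space, d ≥ 1, τ > 0, ε > 0, M ≥ 0, K ≥ 1 and E₀ ≥ 0. For k = 0, …, K let ũ^k, u^k ∈ L²(μ; ℝ) and g̃^k, g^k ∈ L²(μ; ℝ^d) with ũ⁰ = u⁰ and g̃⁰ = g⁰, and set δ^k = ũ^k − u^k and h^k = g̃^k − g^k. Assume: (a) for every k = 1, …, K, ∫_Ω (d_t δ^k) δ^k dμ + ∫_Ω ( g̃^k/|g̃^k|_ε − g^k/|g^{k-1}|_ε ) · h^k dμ = 0; (b) the inverse-type estimate ‖h^k‖_{L²(μ)} ≤ M ‖δ^k‖_{L²(μ)} for every k; (c) the dissipation bound (τ²/2) Σ_{k=1}^K ∫_Ω |d_t g^k|² / |g^{k-1}|_ε dμ ≤ E₀. Then max_{k=0,…,K} ‖δ^k‖_{L²(μ)} ≤ 2√2 · τ^{1/2} M ε^{-1/2} (E₀ K τ)^{1/2}. -/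
/-!
Testing the difference of the two schemes with `δ^k` gives
`‖δ^k‖² ≤ ‖δ^{k-1}‖² + 2τ (−B_k)`, where `B_k` is the flux term. Splitting the lagged flux
`g^k/|g^{k-1}|_ε = g^k/|g^k|_ε + (1/|g^k|_ε − 1/|g^{k-1}|_ε) g^k`, the first part is monotone
(the gradient of the convex function `|·|_ε`) and the second is controlled by the Lipschitz
continuity of `|·|_ε`, so `−B_k ≤ ε^{-1/2} S_k^{1/2} ‖h^k‖ ≤ ε^{-1/2} M S_k^{1/2} ‖δ^k‖`, with
`S_k = ∫ |g^k − g^{k-1}|²/|g^{k-1}|_ε`. The recursion `x_k² ≤ x_{k-1}² + b_k x_k` gives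
`x_k ≤ Σ b_j`, and Cauchy–Schwarz together with the dissipation bound `Σ S_k ≤ 2E₀` gives
`Σ S_k^{1/2} ≤ (2KE₀)^{1/2}`.
-/

open RealInnerProductSpace MeasureTheory

/-- The standard regularized euclidean length `|a|_ε = (|a|² + ε²)^{1/2}`. -/
noncomputable def regLen {d : ℕ} (ε : ℝ) (a : EuclideanSpace ℝ (Fin d)) : ℝ :=
  Real.sqrt (‖a‖^2 + ε^2)

section RegLen

variable {d : ℕ} {ε : ℝ}

lemma regLen_eq_norm_toLp (ε : ℝ) (a : EuclideanSpace ℝ (Fin d)) :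
    regLen ε a = ‖WithLp.toLp 2 (a, ε)‖ := by
  simp [regLen, WithLp.prod_norm_eq_of_L2]

lemma abs_regLen_sub_regLen_le (ε : ℝ) (a b : EuclideanSpace ℝ (Fin d)) :
    |regLen ε a - regLen ε b| ≤ ‖a - b‖ := by
  simpa [regLen_eq_norm_toLp, ← WithLp.toLp_sub, WithLp.prod_norm_eq_of_L2] using
    abs_norm_sub_norm_le (WithLp.toLp 2 (a, ε)) (WithLp.toLp 2 (b, ε))

lemma continuous_regLen (ε : ℝ) : Continuous (regLen (d := d) ε) := by
  unfold regLen; fun_prop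

lemma regLen_pos (hε : 0 < ε) (a : EuclideanSpace ℝ (Fin d)) : 0 < regLen ε a :=
  Real.sqrt_pos.2 (by positivity)

lemma le_regLen (ε : ℝ) (a : EuclideanSpace ℝ (Fin d)) : ε ≤ regLen ε a :=
  Real.le_sqrt_of_sq_le (le_add_of_nonneg_left (sq_nonneg _))

lemma norm_le_regLen (ε : ℝ) (a : EuclideanSpace ℝ (Fin d)) : ‖a‖ ≤ regLen ε a :=
  Real.le_sqrt_of_sq_le (le_add_of_nonneg_right (sq_nonneg _))

lemma norm_div_regLen_le_of_norm_le (hε : 0 < ε) {a b : EuclideanSpace ℝ (Fin d)}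
    (h : ‖a‖ ≤ ‖b‖) : ‖a‖ / regLen ε a ≤ ‖b‖ / regLen ε b := by
  have hA := regLen_pos hε a
  have hB := regLen_pos hε b
  rw [div_le_div_iff₀ hA hB, ← sq_le_sq₀ (by positivity) (by positivity), mul_pow, mul_pow,
    regLen, regLen, Real.sq_sqrt (by positivity), Real.sq_sqrt (by positivity)]
  nlinarith [pow_le_pow_left₀ (norm_nonneg a) h 2, sq_nonneg ε]

lemma inner_regLen_smul_sub_nonneg (hε : 0 < ε) (a b : EuclideanSpace ℝ (Fin d)) :
    0 ≤ ⟪(regLen ε a)⁻¹ • a - (regLen ε b)⁻¹ • b, a - b⟫ := by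
  have hA := regLen_pos hε a
  have hB := regLen_pos hε b
  have hmono : 0 ≤ (‖a‖ - ‖b‖) * (‖a‖ / regLen ε a - ‖b‖ / regLen ε b) := by
    rcases le_total ‖a‖ ‖b‖ with h | h
    · exact mul_nonneg_of_nonpos_of_nonpos (by linarith)
        (by linarith [norm_div_regLen_le_of_norm_le hε h])
    · exact mul_nonneg (by linarith) (by linarith [norm_div_regLen_le_of_norm_le hε h])
  calc 0 ≤ (‖a‖ - ‖b‖) * (‖a‖ / regLen ε a - ‖b‖ / regLen ε b) := hmono
    _ = ‖a‖ ^ 2 / regLen ε a + ‖b‖ ^ 2 / regLen ε b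
          - ‖a‖ * ‖b‖ * ((regLen ε a)⁻¹ + (regLen ε b)⁻¹) := by ring
    _ ≤ ‖a‖ ^ 2 / regLen ε a + ‖b‖ ^ 2 / regLen ε b
          - ⟪a, b⟫ * ((regLen ε a)⁻¹ + (regLen ε b)⁻¹) := by
        gcongr
        exact real_inner_le_norm a b
    _ = ⟪(regLen ε a)⁻¹ • a - (regLen ε b)⁻¹ • b, a - b⟫ := by
        simp only [inner_sub_left, inner_sub_right, real_inner_smul_left,
          real_inner_self_eq_norm_sq, real_inner_comm a b]
        ring

lemma abs_inv_regLen_sub_inv_regLen_mul_norm_le (hε : 0 < ε) (b c : EuclideanSpace ℝ (Fin d)) :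
    |(regLen ε b)⁻¹ - (regLen ε c)⁻¹| * ‖b‖ ≤ ‖b - c‖ / regLen ε c := by
  have hB := regLen_pos hε b
  have hC := regLen_pos hε c
  calc |(regLen ε b)⁻¹ - (regLen ε c)⁻¹| * ‖b‖
      = |regLen ε b - regLen ε c| / regLen ε c * (‖b‖ / regLen ε b) := by
        rw [inv_sub_inv hB.ne' hC.ne', abs_div, abs_sub_comm, abs_of_pos (mul_pos hB hC)]
        field_simp
    _ ≤ ‖b - c‖ / regLen ε c * 1 := by
        gcongr
        · exact abs_regLen_sub_regLen_le ε b c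
        · exact div_le_one_of_le₀ (norm_le_regLen ε b) hB.le
    _ = ‖b - c‖ / regLen ε c := mul_one _

lemma neg_mul_le_inner_regLen_smul_sub (hε : 0 < ε) (a b c : EuclideanSpace ℝ (Fin d)) :
    -(‖b - c‖ / regLen ε c * ‖a - b‖) ≤ ⟪(regLen ε a)⁻¹ • a - (regLen ε c)⁻¹ • b, a - b⟫ := by
  have hsplit : (regLen ε a)⁻¹ • a - (regLen ε c)⁻¹ • b
      = ((regLen ε a)⁻¹ • a - (regLen ε b)⁻¹ • b) + ((regLen ε b)⁻¹ - (regLen ε c)⁻¹) • b := by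
    rw [sub_smul]; abel
  have hcross : -(|(regLen ε b)⁻¹ - (regLen ε c)⁻¹| * ‖b‖ * ‖a - b‖)
      ≤ ((regLen ε b)⁻¹ - (regLen ε c)⁻¹) * ⟪b, a - b⟫ := by
    calc -(|(regLen ε b)⁻¹ - (regLen ε c)⁻¹| * ‖b‖ * ‖a - b‖)
        ≤ -|((regLen ε b)⁻¹ - (regLen ε c)⁻¹) * ⟪b, a - b⟫| := by
          rw [abs_mul, mul_assoc]
          gcongr
          exact abs_real_inner_le_norm b (a - b)
      _ ≤ _ := neg_abs_le _
  have hcoef := mul_le_mul_of_nonneg_right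
    (abs_inv_regLen_sub_inv_regLen_mul_norm_le hε b c) (norm_nonneg (a - b))
  rw [hsplit, inner_add_left, real_inner_smul_left]
  linarith [inner_regLen_smul_sub_nonneg hε a b]

lemma div_regLen_le_inv_sqrt_mul_div_sqrt (hε : 0 < ε) {t : ℝ} (ht : 0 ≤ t)
    (c : EuclideanSpace ℝ (Fin d)) :
    t / regLen ε c ≤ (√ε)⁻¹ * (t / √(regLen ε c)) := by
  have hC := regLen_pos hε c
  have hsε : √ε ≤ √(regLen ε c) := Real.sqrt_le_sqrt (le_regLen ε c)
  calc t / regLen ε c = t / (√(regLen ε c) * √(regLen ε c)) := by rw [Real.mul_self_sqrt hC.le]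
    _ ≤ t / (√ε * √(regLen ε c)) := by gcongr
    _ = (√ε)⁻¹ * (t / √(regLen ε c)) := by field_simp

end RegLen

section Integrals

variable {Ω : Type*} [MeasurableSpace Ω] {μ : Measure Ω}

lemma integral_mul_le_sqrt_mul_sqrt {f g : Ω → ℝ} (hf : MemLp f 2 μ) (hg : MemLp g 2 μ)
    (hf0 : ∀ x, 0 ≤ f x) (hg0 : ∀ x, 0 ≤ g x) :
    ∫ x, f x * g x ∂μ ≤ √(∫ x, f x ^ 2 ∂μ) * √(∫ x, g x ^ 2 ∂μ) := by
  have h := integral_mul_le_Lp_mul_Lq_of_nonneg Real.HolderConjugate.two_two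
    (.of_forall hf0) (.of_forall hg0) (by simpa using hf) (by simpa using hg)
  simpa only [Real.rpow_two, ← Real.sqrt_eq_rpow] using h

-- `∫ g = 0` when `g` is not integrable, which is why `∫ f ≤ 0` is assumed.
lemma integral_mono_of_integral_nonpos {f g : Ω → ℝ} (hf : Integrable f μ)
    (hf0 : ∫ x, f x ∂μ ≤ 0) (hfg : ∀ x, f x ≤ g x) : ∫ x, f x ∂μ ≤ ∫ x, g x ∂μ := by
  by_cases hg : Integrable g μ
  · exact integral_mono hf hg hfg
  · rwa [integral_undef hg]

lemma half_sub_le_integral_sub_mul {δ₀ δ₁ : Ω → ℝ} (hδ₀ : MemLp δ₀ 2 μ) (hδ₁ : MemLp δ₁ 2 μ) :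
    (∫ x, δ₁ x ^ 2 ∂μ - ∫ x, δ₀ x ^ 2 ∂μ) / 2 ≤ ∫ x, (δ₁ x - δ₀ x) * δ₁ x ∂μ := by
  rw [← integral_sub hδ₁.integrable_sq hδ₀.integrable_sq, ← integral_div]
  refine integral_mono ((hδ₁.integrable_sq.sub hδ₀.integrable_sq).div_const 2)
    ((hδ₁.sub hδ₀).integrable_mul hδ₁) fun x => ?_
  nlinarith [sq_nonneg (δ₁ x - δ₀ x)]

lemma integral_sq_le_of_backward_difference {δ₀ δ₁ : Ω → ℝ} {τ B R : ℝ} (hτ : 0 < τ)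
    (hδ₀ : MemLp δ₀ 2 μ) (hδ₁ : MemLp δ₁ 2 μ)
    (h : (∫ x, (δ₁ x - δ₀ x) / τ * δ₁ x ∂μ) + B = 0) (hB : -B ≤ R) :
    ∫ x, δ₁ x ^ 2 ∂μ ≤ ∫ x, δ₀ x ^ 2 ∂μ + 2 * τ * R := by
  have hdiv : ∫ x, (δ₁ x - δ₀ x) / τ * δ₁ x ∂μ = (∫ x, (δ₁ x - δ₀ x) * δ₁ x ∂μ) / τ := by
    rw [← integral_div]; congr 1; funext x; ring
  have hmul : ∫ x, (δ₁ x - δ₀ x) * δ₁ x ∂μ ≤ τ * R := by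
    rw [hdiv, div_add' _ _ _ hτ.ne', div_eq_zero_iff] at h
    linarith [h.resolve_right hτ.ne', mul_le_mul_of_nonneg_left hB hτ.le]
  linarith [half_sub_le_integral_sub_mul hδ₀ hδ₁]

variable {d : ℕ} {ε : ℝ}

lemma memLp_norm_div_sqrt_regLen (hε : 0 < ε) {v c : Ω → EuclideanSpace ℝ (Fin d)}
    (hv : MemLp v 2 μ) (hc : AEStronglyMeasurable c μ) :
    MemLp (fun x => ‖v x‖ / √(regLen ε (c x))) 2 μ := by
  refine hv.norm.of_le_mul (c := (√ε)⁻¹)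
    (hv.aestronglyMeasurable.norm.div₀ (((continuous_regLen ε).sqrt).comp_aestronglyMeasurable hc))
    (.of_forall fun x => ?_)
  have hsε : √ε ≤ √(regLen ε (c x)) := Real.sqrt_le_sqrt (le_regLen ε (c x))
  rw [norm_norm, Real.norm_of_nonneg (by positivity), div_eq_inv_mul]
  exact mul_le_mul_of_nonneg_right (inv_anti₀ (Real.sqrt_pos.2 hε) hsε) (norm_nonneg _)

lemma neg_integral_inner_regLen_smul_sub_le (hε : 0 < ε) {a b c : Ω → EuclideanSpace ℝ (Fin d)}
    (hab : MemLp (fun x => a x - b x) 2 μ) (hbc : MemLp (fun x => b x - c x) 2 μ)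
    (hc : AEStronglyMeasurable c μ) :
    -∫ x, ⟪(regLen ε (a x))⁻¹ • a x - (regLen ε (c x))⁻¹ • b x, a x - b x⟫ ∂μ
      ≤ (√ε)⁻¹ * √(∫ x, ‖b x - c x‖ ^ 2 / regLen ε (c x) ∂μ) * √(∫ x, ‖a x - b x‖ ^ 2 ∂μ) := by
  set q := fun x => ‖b x - c x‖ / √(regLen ε (c x))
  have hq : MemLp q 2 μ := memLp_norm_div_sqrt_regLen hε hbc hc
  have hq0 : ∀ x, 0 ≤ q x := fun x => by positivity
  have hq_sq : ∫ x, q x ^ 2 ∂μ = ∫ x, ‖b x - c x‖ ^ 2 / regLen ε (c x) ∂μ := by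
    congr 1; funext x
    rw [div_pow, Real.sq_sqrt (regLen_pos hε (c x)).le]
  have hpointwise : ∀ x, -((√ε)⁻¹ * (q x * ‖a x - b x‖))
      ≤ ⟪(regLen ε (a x))⁻¹ • a x - (regLen ε (c x))⁻¹ • b x, a x - b x⟫ := fun x => by
    refine le_trans ?_ (neg_mul_le_inner_regLen_smul_sub hε (a x) (b x) (c x))
    rw [← mul_assoc]
    gcongr
    exact div_regLen_le_inv_sqrt_mul_div_sqrt hε (norm_nonneg _) (c x)
  have hint : Integrable (fun x => (√ε)⁻¹ * (q x * ‖a x - b x‖)) μ :=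
    (hq.integrable_mul hab.norm).const_mul _
  calc -∫ x, ⟪(regLen ε (a x))⁻¹ • a x - (regLen ε (c x))⁻¹ • b x, a x - b x⟫ ∂μ
      ≤ -∫ x, -((√ε)⁻¹ * (q x * ‖a x - b x‖)) ∂μ := by
        refine neg_le_neg (integral_mono_of_integral_nonpos hint.neg ?_ hpointwise)
        rw [integral_neg, neg_nonpos]
        exact integral_nonneg fun x => by positivity
    _ = (√ε)⁻¹ * ∫ x, q x * ‖a x - b x‖ ∂μ := by rw [integral_neg, neg_neg, integral_const_mul]
    _ ≤ (√ε)⁻¹ * (√(∫ x, q x ^ 2 ∂μ) * √(∫ x, ‖a x - b x‖ ^ 2 ∂μ)) := by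
        gcongr
        exact integral_mul_le_sqrt_mul_sqrt hq hab.norm hq0 fun x => norm_nonneg _
    _ = _ := by rw [hq_sq, mul_assoc]

lemma integral_sq_le_of_tested_scheme_difference {τ M : ℝ} (hτ : 0 < τ) (hε : 0 < ε)
    {δ₀ δ₁ : Ω → ℝ} {gt₁ g₁ g₀ : Ω → EuclideanSpace ℝ (Fin d)}
    (hδ₀ : MemLp δ₀ 2 μ) (hδ₁ : MemLp δ₁ 2 μ) (hh : MemLp (fun x => gt₁ x - g₁ x) 2 μ)
    (hdg : MemLp (fun x => g₁ x - g₀ x) 2 μ) (hg₀ : AEStronglyMeasurable g₀ μ)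
    (htested : (∫ x, (δ₁ x - δ₀ x) / τ * δ₁ x ∂μ)
      + ∫ x, ⟪(regLen ε (gt₁ x))⁻¹ • gt₁ x - (regLen ε (g₀ x))⁻¹ • g₁ x, gt₁ x - g₁ x⟫ ∂μ = 0)
    (hinverse : √(∫ x, ‖gt₁ x - g₁ x‖ ^ 2 ∂μ) ≤ M * √(∫ x, δ₁ x ^ 2 ∂μ)) :
    ∫ x, δ₁ x ^ 2 ∂μ ≤ ∫ x, δ₀ x ^ 2 ∂μ + 2 * τ * (√ε)⁻¹ * M
      * √(∫ x, ‖g₁ x - g₀ x‖ ^ 2 / regLen ε (g₀ x) ∂μ) * √(∫ x, δ₁ x ^ 2 ∂μ) := by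
  have hflux := calc
    -∫ x, ⟪(regLen ε (gt₁ x))⁻¹ • gt₁ x - (regLen ε (g₀ x))⁻¹ • g₁ x, gt₁ x - g₁ x⟫ ∂μ
      ≤ (√ε)⁻¹ * √(∫ x, ‖g₁ x - g₀ x‖ ^ 2 / regLen ε (g₀ x) ∂μ)
          * √(∫ x, ‖gt₁ x - g₁ x‖ ^ 2 ∂μ) :=
        neg_integral_inner_regLen_smul_sub_le hε hh hdg hg₀
    _ ≤ (√ε)⁻¹ * √(∫ x, ‖g₁ x - g₀ x‖ ^ 2 / regLen ε (g₀ x) ∂μ)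
          * (M * √(∫ x, δ₁ x ^ 2 ∂μ)) := by gcongr
  calc ∫ x, δ₁ x ^ 2 ∂μ
      ≤ ∫ x, δ₀ x ^ 2 ∂μ + 2 * τ * ((√ε)⁻¹ * √(∫ x, ‖g₁ x - g₀ x‖ ^ 2 / regLen ε (g₀ x) ∂μ)
          * (M * √(∫ x, δ₁ x ^ 2 ∂μ))) :=
        integral_sq_le_of_backward_difference hτ hδ₀ hδ₁ htested hflux
    _ = _ := by ring

variable {ι E : Type*} [NormedAddCommGroup E] [NormedSpace ℝ E]

lemma sum_integral_norm_sq_div_le_of_smul_inv {τ E₀ : ℝ} (hτ : τ ≠ 0) (s : Finset ι)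
    (v : ι → Ω → E) (w : ι → Ω → ℝ)
    (h : τ ^ 2 / 2 * ∑ k ∈ s, ∫ x, ‖(1 / τ) • v k x‖ ^ 2 / w k x ∂μ ≤ E₀) :
    ∑ k ∈ s, ∫ x, ‖v k x‖ ^ 2 / w k x ∂μ ≤ 2 * E₀ := by
  have hscale : ∀ k, ∫ x, ‖(1 / τ) • v k x‖ ^ 2 / w k x ∂μ
      = (∫ x, ‖v k x‖ ^ 2 / w k x ∂μ) / τ ^ 2 := fun k => by
    rw [← integral_div]
    congr 1; funext x
    rw [norm_smul, norm_div, norm_one, Real.norm_eq_abs, mul_pow, div_pow, sq_abs]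
    ring
  simp only [hscale, ← Finset.sum_div] at h
  field_simp at h
  linarith

end Integrals

lemma sum_sqrt_le_sqrt_card_mul_sqrt_sum {ι : Type*} (s : Finset ι) {f : ι → ℝ}
    (hf : ∀ i, 0 ≤ f i) : ∑ i ∈ s, √(f i) ≤ √(s.card) * √(∑ i ∈ s, f i) := by
  simpa using Real.sum_sqrt_mul_sqrt_le s (fun _ => zero_le_one) hf

lemma le_add_of_sq_le_sq_add_mul {a b x : ℝ} (ha : 0 ≤ a) (hb : 0 ≤ b) (h : x ^ 2 ≤ a ^ 2 + b * x) :
    x ≤ a + b := by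
  nlinarith

open Finset in
lemma sqrt_le_mul_sum_of_le_add_mul_sqrt {I s : ℕ → ℝ} {C : ℝ} {K : ℕ} (hC : 0 ≤ C)
    (hs : ∀ k, 0 ≤ s k) (hI : ∀ k, 0 ≤ I k) (hI0 : I 0 = 0)
    (hstep : ∀ k, 1 ≤ k → k ≤ K → I k ≤ I (k - 1) + C * s k * √(I k)) :
    ∀ k ≤ K, √(I k) ≤ C * ∑ j ∈ Icc 1 K, s j := by
  have hsum_nonneg : ∀ k, 0 ≤ C * ∑ j ∈ Icc 1 k, s j := fun k =>
    mul_nonneg hC (sum_nonneg fun j _ => hs j)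
  have hpartial : ∀ k ≤ K, √(I k) ≤ C * ∑ j ∈ Icc 1 k, s j := by
    intro k
    induction k with
    | zero => simp [hI0]
    | succ m ih =>
      intro hm
      rw [sum_Icc_succ_top (by omega), mul_add]
      refine le_add_of_sq_le_sq_add_mul (hsum_nonneg m) (mul_nonneg hC (hs _)) ?_
      calc √(I (m + 1)) ^ 2 = I (m + 1) := Real.sq_sqrt (hI _)
        _ ≤ I m + C * s (m + 1) * √(I (m + 1)) := by simpa using hstep (m + 1) (by omega) hm
        _ ≤ (C * ∑ j ∈ Icc 1 m, s j) ^ 2 + C * s (m + 1) * √(I (m + 1)) := by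
          gcongr
          rw [← Real.sq_sqrt (hI m)]
          gcongr
          exact ih (by omega)
  intro k hk
  refine (hpartial k hk).trans (mul_le_mul_of_nonneg_left ?_ hC)
  exact sum_le_sum_of_subset_of_nonneg (Icc_subset_Icc_right hk) fun j _ _ => hs j

theorem stmt3_general {Ω : Type*} [MeasurableSpace Ω] (μ : Measure Ω)
    (d : ℕ) (τ ε M : ℝ) (hτ : 0 < τ) (hε : 0 < ε) (hM : 0 ≤ M)
    (K : ℕ) (E₀ : ℝ)
    (ut u : ℕ → Ω → ℝ) (gt g : ℕ → Ω → EuclideanSpace ℝ (Fin d))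
    (hut : ∀ k ≤ K, MemLp (ut k) 2 μ)
    (hu : ∀ k ≤ K, MemLp (u k) 2 μ)
    (hgt : ∀ k ≤ K, MemLp (gt k) 2 μ)
    (hg : ∀ k ≤ K, MemLp (g k) 2 μ)
    (h0 : ut 0 = u 0)
    (ha : ∀ k, 1 ≤ k → k ≤ K →
      (∫ x, (((ut k x - u k x) - (ut (k-1) x - u (k-1) x)) / τ) * (ut k x - u k x) ∂μ)
        + ∫ x, ⟪(regLen ε (gt k x))⁻¹ • gt k x - (regLen ε (g (k-1) x))⁻¹ • g k x,
                gt k x - g k x⟫ ∂μ = 0)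
    (hb : ∀ k ≤ K, Real.sqrt (∫ x, ‖gt k x - g k x‖^2 ∂μ)
        ≤ M * Real.sqrt (∫ x, (ut k x - u k x)^2 ∂μ))
    (hc : (τ^2 / 2) * ∑ k ∈ Finset.Icc 1 K,
        ∫ x, ‖(1/τ) • (g k x - g (k-1) x)‖^2 / regLen ε (g (k-1) x) ∂μ ≤ E₀) :
    ∀ k ≤ K, Real.sqrt (∫ x, (ut k x - u k x)^2 ∂μ)
      ≤ 2 * Real.sqrt 2 * τ ^ ((1:ℝ)/2) * M * ε ^ (-(1:ℝ)/2)
          * (E₀ * K * τ) ^ ((1:ℝ)/2) := by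
  set I : ℕ → ℝ := fun k => ∫ x, (ut k x - u k x) ^ 2 ∂μ
  set S : ℕ → ℝ := fun k => ∫ x, ‖g k x - g (k - 1) x‖ ^ 2 / regLen ε (g (k - 1) x) ∂μ
  have hS : ∑ k ∈ Finset.Icc 1 K, S k ≤ 2 * E₀ :=
    sum_integral_norm_sq_div_le_of_smul_inv hτ.ne' _ (fun k x => g k x - g (k - 1) x)
      (fun k x => regLen ε (g (k - 1) x)) hc
  have hδ : ∀ j ≤ K, MemLp (fun x => ut j x - u j x) 2 μ := fun j hj => (hut j hj).sub (hu j hj)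
  have hstep : ∀ k, 1 ≤ k → k ≤ K →
      I k ≤ I (k - 1) + 2 * τ * (√ε)⁻¹ * M * √(S k) * √(I k) := fun k hk hkK =>
    integral_sq_le_of_tested_scheme_difference hτ hε (hδ (k - 1) (by omega)) (hδ k hkK)
      ((hgt k hkK).sub (hg k hkK)) ((hg k hkK).sub (hg (k - 1) (by omega)))
      (hg (k - 1) (by omega)).aestronglyMeasurable (ha k hk hkK) (hb k hkK)
  have hS0 : ∀ k, 0 ≤ S k := fun k =>
    integral_nonneg fun x => div_nonneg (sq_nonneg _) (regLen_pos hε _).le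
  intro k hk
  calc √(I k) ≤ 2 * τ * (√ε)⁻¹ * M * ∑ k ∈ Finset.Icc 1 K, √(S k) :=
        sqrt_le_mul_sum_of_le_add_mul_sqrt (by positivity) (fun _ => Real.sqrt_nonneg _)
          (fun _ => integral_nonneg fun _ => sq_nonneg _) (by simp [h0]) hstep k hk
    _ ≤ 2 * τ * (√ε)⁻¹ * M * (√K * √(2 * E₀)) := by
        gcongr
        calc ∑ k ∈ Finset.Icc 1 K, √(S k)
            ≤ √(Finset.Icc 1 K).card * √(∑ k ∈ Finset.Icc 1 K, S k) :=
              sum_sqrt_le_sqrt_card_mul_sqrt_sum _ hS0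
          _ ≤ √K * √(2 * E₀) := by rw [Nat.card_Icc, Nat.add_sub_cancel]; gcongr
    _ = _ := by
      rw [show -(1:ℝ) / 2 = -(1 / 2) by ring, Real.rpow_neg hε.le, ← Real.sqrt_eq_rpow,
        ← Real.sqrt_eq_rpow, ← Real.sqrt_eq_rpow, Real.sqrt_mul' _ hτ.le,
        Real.sqrt_mul' _ (Nat.cast_nonneg K), Real.sqrt_mul zero_le_two]
      linear_combination (2 * √2 * (√ε)⁻¹ * M * √E₀ * √K) * (Real.mul_self_sqrt hτ.le).symm

/-- Error estimate between the implicit iterates `(ũ^k, g̃^k)` and semi-implicit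
iterates `(u^k, g^k)` for the regularized total variation flow
(Proposition 4.1, abstract form): under (a) the tested difference of the schemes,
(b) the inverse-type estimate, and (c) the dissipation bound, the differences
`δ^k = ũ^k − u^k` satisfy
`max_k ‖δ^k‖_{L²} ≤ 2√2 τ^{1/2} M ε^{-1/2} (E₀ K τ)^{1/2}`. -/
theorem stmt3 {Ω : Type*} [MeasurableSpace Ω] (μ : Measure Ω)
    (d : ℕ) (hd : 1 ≤ d) (τ ε M : ℝ) (hτ : 0 < τ) (hε : 0 < ε) (hM : 0 ≤ M)
    (K : ℕ) (hK : 1 ≤ K) (E₀ : ℝ) (hE₀ : 0 ≤ E₀)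
    (ut u : ℕ → Ω → ℝ) (gt g : ℕ → Ω → EuclideanSpace ℝ (Fin d))
    (hut : ∀ k ≤ K, MemLp (ut k) 2 μ)
    (hu : ∀ k ≤ K, MemLp (u k) 2 μ)
    (hgt : ∀ k ≤ K, MemLp (gt k) 2 μ)
    (hg : ∀ k ≤ K, MemLp (g k) 2 μ)
    (h0 : ut 0 = u 0) (hg0 : gt 0 = g 0)
    (ha : ∀ k, 1 ≤ k → k ≤ K →
      (∫ x, (((ut k x - u k x) - (ut (k-1) x - u (k-1) x)) / τ) * (ut k x - u k x) ∂μ)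
        + ∫ x, ⟪(regLen ε (gt k x))⁻¹ • gt k x - (regLen ε (g (k-1) x))⁻¹ • g k x,
                gt k x - g k x⟫ ∂μ = 0)
    (hb : ∀ k ≤ K, Real.sqrt (∫ x, ‖gt k x - g k x‖^2 ∂μ)
        ≤ M * Real.sqrt (∫ x, (ut k x - u k x)^2 ∂μ))
    (hc : (τ^2 / 2) * ∑ k ∈ Finset.Icc 1 K,
        ∫ x, ‖(1/τ) • (g k x - g (k-1) x)‖^2 / regLen ε (g (k-1) x) ∂μ ≤ E₀) :
    ∀ k ≤ K, Real.sqrt (∫ x, (ut k x - u k x)^2 ∂μ)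
      ≤ 2 * Real.sqrt 2 * τ ^ ((1:ℝ)/2) * M * ε ^ (-(1:ℝ)/2)
          * (E₀ * K * τ) ^ ((1:ℝ)/2) :=
  stmt3_general μ d τ ε M hτ hε hM K E₀ ut u gt g hut hu hgt hg h0 ha hb hc
end

section
/- Stability of subgradient flows under perturbation of the energy: Let H be a real Hilbert space, T > 0, δ ≥ 0, and let E₁, E₂ : H → ℝ satisfy |E₁(w) − E₂(w)| ≤ δ for all w ∈ H. Let u, v : [0,T] → H be continuous on [0,T] and differentiable at every t ∈ (0,T) with u(0) = v(0), and suppose that for every t ∈ (0,T) and every w ∈ H the variational inequalities ⟨−u'(t), w − u(t)⟩ + E₁(u(t)) ≤ E₁(w) and ⟨−v'(t), w − v(t)⟩ + E₂(v(t)) ≤ E₂(w) hold. Then ‖u(t) − v(t)‖ ≤ 2 (δ t)^{1/2} for every t ∈ [0,T]; in particular sup_{t∈[0,T]} ‖u(t) − v(t)‖ ≤ 2 (δ T)^{1/2}. -/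
/-!
Subtracting the two variational inequalities, tested with `w = v(t)` and `w = u(t)`, gives
`⟪u' - v', u - v⟫ ≤ (E₁ - E₂)(v) - (E₁ - E₂)(u) ≤ 2δ`. Hence `‖u - v‖²` grows at rate at most
`4δ`, and since it vanishes at `t = 0`, `‖u(t) - v(t)‖² ≤ 4δt`.
-/

open RealInnerProductSpace Set

section

variable {H : Type*} [NormedAddCommGroup H] [InnerProductSpace ℝ H]

theorem inner_sub_sub_le_of_subgradient_ineq {E₁ E₂ : H → ℝ} {x y a b : H}
    (ha : ∀ w, ⟪-a, w - x⟫ + E₁ x ≤ E₁ w) (hb : ∀ w, ⟪-b, w - y⟫ + E₂ y ≤ E₂ w) :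
    ⟪a - b, x - y⟫ ≤ (E₁ y - E₂ y) - (E₁ x - E₂ x) := by
  have hx := ha y
  have hy := hb x
  rw [inner_neg_left, ← inner_neg_right, neg_sub] at hx
  rw [inner_neg_left] at hy
  rw [inner_sub_left]
  linarith

theorem norm_sq_sub_norm_sq_le_of_inner_deriv_le {f f' : ℝ → H} {a b C : ℝ}
    (hf : ContinuousOn f (Icc a b)) (hf' : ∀ t ∈ Ioo a b, HasDerivAt f (f' t) t)
    (hC : ∀ t ∈ Ioo a b, ⟪f t, f' t⟫ ≤ C) :
    ∀ t ∈ Icc a b, ‖f t‖ ^ 2 - ‖f a‖ ^ 2 ≤ 2 * C * (t - a) := by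
  intro t ht
  have hderiv : ∀ s ∈ Ioo a b, HasDerivAt (‖f ·‖ ^ 2) (2 * ⟪f s, f' s⟫) s :=
    fun s hs => (hf' s hs).norm_sq
  refine (convex_Icc a b).image_sub_le_mul_sub_of_deriv_le (f := (‖f ·‖ ^ 2))
    (hf.norm.pow 2) ?_ ?_ a
    (left_mem_Icc.mpr (ht.1.trans ht.2)) t ht ht.1
  · rw [interior_Icc]
    exact fun s hs => (hderiv s hs).differentiableAt.differentiableWithinAt
  · rw [interior_Icc]
    intro s hs
    rw [(hderiv s hs).deriv]
    linarith [hC s hs]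

end

theorem stmt9_general {H : Type*} [NormedAddCommGroup H] [InnerProductSpace ℝ H]
    (T δ : ℝ)
    (E₁ E₂ : H → ℝ) (hE : ∀ w, |E₁ w - E₂ w| ≤ δ)
    (u v u' v' : ℝ → H)
    (hu : ContinuousOn u (Set.Icc 0 T)) (hv : ContinuousOn v (Set.Icc 0 T))
    (hu' : ∀ t ∈ Set.Ioo 0 T, HasDerivAt u (u' t) t)
    (hv' : ∀ t ∈ Set.Ioo 0 T, HasDerivAt v (v' t) t)
    (h0 : u 0 = v 0)
    (hvi1 : ∀ t ∈ Set.Ioo 0 T, ∀ w, ⟪-u' t, w - u t⟫ + E₁ (u t) ≤ E₁ w)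
    (hvi2 : ∀ t ∈ Set.Ioo 0 T, ∀ w, ⟪-v' t, w - v t⟫ + E₂ (v t) ≤ E₂ w) :
    ∀ t ∈ Set.Icc 0 T, ‖u t - v t‖ ≤ 2 * (δ * t) ^ ((1:ℝ)/2) := by
  have hmono : ∀ t ∈ Ioo 0 T, ⟪u t - v t, u' t - v' t⟫ ≤ 2 * δ := fun t ht => by
    rw [real_inner_comm]
    have := inner_sub_sub_le_of_subgradient_ineq (hvi1 t ht) (hvi2 t ht)
    linarith [(abs_le.mp (hE (u t))).1, (abs_le.mp (hE (v t))).2]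
  intro t ht
  have hsq : ‖u t - v t‖ ^ 2 ≤ 2 ^ 2 * (δ * t) := by
    have := norm_sq_sub_norm_sq_le_of_inner_deriv_le (f := fun s => u s - v s) (hu.sub hv)
      (fun s hs => (hu' s hs).sub (hv' s hs)) hmono t ht
    rw [h0, sub_self, norm_zero] at this
    linarith
  calc ‖u t - v t‖ ≤ Real.sqrt (2 ^ 2 * (δ * t)) := Real.le_sqrt_of_sq_le hsq
    _ = 2 * (δ * t) ^ ((1:ℝ)/2) := by
      rw [Real.sqrt_mul (by norm_num), Real.sqrt_sq (by norm_num), Real.sqrt_eq_rpow]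

/-- Stability of subgradient flows under perturbation of the energy: if
`|E₁(w) − E₂(w)| ≤ δ` for all `w`, `u(0) = v(0)`, and `u, v` solve the
subgradient flow variational inequalities for `E₁` and `E₂` respectively,
then `‖u(t) − v(t)‖ ≤ 2 (δ t)^{1/2}` for every `t ∈ [0,T]`. -/
theorem stmt9 {H : Type*} [NormedAddCommGroup H] [InnerProductSpace ℝ H]
    (T δ : ℝ) (hT : 0 < T) (hδ : 0 ≤ δ)
    (E₁ E₂ : H → ℝ) (hE : ∀ w, |E₁ w - E₂ w| ≤ δ)
    (u v u' v' : ℝ → H)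
    (hu : ContinuousOn u (Set.Icc 0 T)) (hv : ContinuousOn v (Set.Icc 0 T))
    (hu' : ∀ t ∈ Set.Ioo 0 T, HasDerivAt u (u' t) t)
    (hv' : ∀ t ∈ Set.Ioo 0 T, HasDerivAt v (v' t) t)
    (h0 : u 0 = v 0)
    (hvi1 : ∀ t ∈ Set.Ioo 0 T, ∀ w, ⟪-u' t, w - u t⟫ + E₁ (u t) ≤ E₁ w)
    (hvi2 : ∀ t ∈ Set.Ioo 0 T, ∀ w, ⟪-v' t, w - v t⟫ + E₂ (v t) ≤ E₂ w) :
    ∀ t ∈ Set.Icc 0 T, ‖u t - v t‖ ≤ 2 * (δ * t) ^ ((1:ℝ)/2) :=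
  stmt9_general T δ E₁ E₂ hE u v u' v' hu hv hu' hv' h0 hvi1 hvi2
end

section
/- Exact monotonicity identity for the regularized 1-Laplacian: for every ε > 0 and all a, b ∈ ℝ^d one has ( a/|a|_ε − b/|b|_ε ) · (a − b) = | (a,ε)/|a|_ε − (b,ε)/|b|_ε |² · (|a|_ε + |b|_ε)/2, where (a,ε) ∈ ℝ^{d+1} denotes the vector a with the additional coordinate ε appended, |a|_ε = (|a|² + ε²)^{1/2} is the euclidean norm of (a,ε) in ℝ^{d+1}, and the norm on the right-hand side is the euclidean norm in ℝ^{d+1}. -/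
open RealInnerProductSpace

noncomputable def appendCoord {d : ℕ} (a : EuclideanSpace ℝ (Fin d)) (ε : ℝ) :
    EuclideanSpace ℝ (Fin (d + 1)) :=
  (EuclideanSpace.equiv (Fin (d + 1)) ℝ).symm
    (Fin.snoc (EuclideanSpace.equiv (Fin d) ℝ a) ε)

lemma inner_appendCoord {d : ℕ} (a b : EuclideanSpace ℝ (Fin d)) (ε : ℝ) :
    ⟪appendCoord a ε, appendCoord b ε⟫ = ⟪a, b⟫ + ε^2 := by
  simp [appendCoord, PiLp.inner_apply, Fin.sum_univ_castSucc, Fin.snoc, sq,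
    RCLike.inner_apply, conj_trivial]

/-- Exact monotonicity identity for the regularized 1-Laplacian
(from Fierro–Veeser): for every `ε > 0` and all `a, b ∈ ℝ^d`,
`( a/|a|_ε − b/|b|_ε ) · (a − b)
  = | (a,ε)/|a|_ε − (b,ε)/|b|_ε |² (|a|_ε + |b|_ε)/2`,
where `|a|_ε = (|a|² + ε²)^{1/2}` is the euclidean norm of `(a,ε)` in `ℝ^{d+1}`
and the norm on the right-hand side is the euclidean norm in `ℝ^{d+1}`. -/
theorem stmt11 (d : ℕ) (ε : ℝ) (hε : 0 < ε) (a b : EuclideanSpace ℝ (Fin d)) :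
    ⟪(Real.sqrt (‖a‖^2 + ε^2))⁻¹ • a - (Real.sqrt (‖b‖^2 + ε^2))⁻¹ • b, a - b⟫
    = ‖(Real.sqrt (‖a‖^2 + ε^2))⁻¹ • appendCoord a ε
        - (Real.sqrt (‖b‖^2 + ε^2))⁻¹ • appendCoord b ε‖^2
      * (Real.sqrt (‖a‖^2 + ε^2) + Real.sqrt (‖b‖^2 + ε^2)) / 2 := by
  set A := Real.sqrt (‖a‖^2 + ε^2) with hAdef
  set B := Real.sqrt (‖b‖^2 + ε^2) with hBdef
  have hA : 0 < A := Real.sqrt_pos.mpr (by positivity)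
  have hB : 0 < B := Real.sqrt_pos.mpr (by positivity)
  have hA2 : A^2 = ‖a‖^2 + ε^2 := Real.sq_sqrt (by positivity)
  have hB2 : B^2 = ‖b‖^2 + ε^2 := Real.sq_sqrt (by positivity)
  have hna : ⟪appendCoord a ε, appendCoord a ε⟫ = ‖a‖^2 + ε^2 := by
    rw [inner_appendCoord, real_inner_self_eq_norm_sq]
  have hnb : ⟪appendCoord b ε, appendCoord b ε⟫ = ‖b‖^2 + ε^2 := by
    rw [inner_appendCoord, real_inner_self_eq_norm_sq]
  have hab : ⟪appendCoord a ε, appendCoord b ε⟫ = ⟪a, b⟫ + ε^2 :=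
    inner_appendCoord a b ε
  have hba : ⟪appendCoord b ε, appendCoord a ε⟫ = ⟪a, b⟫ + ε^2 := by
    rw [real_inner_comm]; exact hab
  have hrhs : ‖A⁻¹ • appendCoord a ε - B⁻¹ • appendCoord b ε‖^2
      = A⁻¹*A⁻¹*(‖a‖^2+ε^2) - 2*(A⁻¹*B⁻¹*(⟪a,b⟫+ε^2)) + B⁻¹*B⁻¹*(‖b‖^2+ε^2) := by
    rw [← real_inner_self_eq_norm_sq]
    simp only [inner_sub_left, inner_sub_right, real_inner_smul_left,
      real_inner_smul_right, hna, hnb, hab, hba]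
    ring
  rw [hrhs]
  simp only [inner_sub_left, inner_sub_right, real_inner_smul_left,
    real_inner_smul_left, real_inner_self_eq_norm_sq, real_inner_comm b a]
  have h1 : ‖a‖^2 = A^2 - ε^2 := by rw [hA2]; ring
  have h2 : ‖b‖^2 = B^2 - ε^2 := by rw [hB2]; ring
  rw [h1, h2]
  field_simp
  ring
end

section
/- Shifted-function characterization of the monotonicity of the Orlicz operator: let φ satisfy condition (C3). Then there exist constants c, C > 0, depending only on the characteristics of φ, such that for all a, b ∈ ℝ^d: c · φ_{|a|}(|a − b|) ≤ (A(a) − A(b)) · (a − b) ≤ C · φ_{|a|}(|a − b|). -/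
open RealInnerProductSpace

/-- The shifted Orlicz function `φ_α(t) = ∫₀^t φ'(α+s) s/(α+s) ds`, expressed in
terms of the derivative `φ'` of `φ`. -/
noncomputable def phiShift (φ' : ℝ → ℝ) (α t : ℝ) : ℝ :=
  ∫ s in (0:ℝ)..t, φ' (α + s) * s / (α + s)

open Classical in
/-- The Orlicz operator `A(a) = (φ'(|a|)/|a|) a` (with `A(0) = 0`). -/
noncomputable def opA (φ' : ℝ → ℝ) {d : ℕ} (a : EuclideanSpace ℝ (Fin d)) :
    EuclideanSpace ℝ (Fin d) :=
  if a = 0 then 0 else (φ' ‖a‖ / ‖a‖) • a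

/-- The convex conjugate `φ*(r) = sup_{s ≥ 0} (rs − φ(s))`. -/
noncomputable def orliczConj (φ : ℝ → ℝ) (r : ℝ) : ℝ :=
  sSup ((fun s => r * s - φ s) '' Set.Ici 0)

set_option maxHeartbeats 1000000
section Aux
variable {φ φ' φ'' : ℝ → ℝ} {c₀ C₀ : ℝ}

lemma phi'_mono (hd1 : ∀ s ∈ Set.Ioi (0:ℝ), HasDerivAt φ (φ' s) s)
    (hconv : ConvexOn ℝ (Set.Ioi 0) φ) :
    ∀ x ∈ Set.Ioi (0:ℝ), ∀ y ∈ Set.Ioi (0:ℝ), x ≤ y → φ' x ≤ φ' y := by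
  intro x hx y hy hxy
  have h := hconv.monotoneOn_deriv (fun s hs => (hd1 s hs).differentiableAt) hx hy hxy
  rwa [(hd1 x hx).deriv, (hd1 y hy).deriv] at h

lemma phi'_pos (hcont : ContinuousOn φ (Set.Ici 0))
    (hd1 : ∀ s ∈ Set.Ioi (0:ℝ), HasDerivAt φ (φ' s) s)
    (hconv : ConvexOn ℝ (Set.Ioi 0) φ)
    (hpos : ∀ s ∈ Set.Ioi (0:ℝ), 0 < φ s) (hφ0 : φ 0 = 0) :
    ∀ s ∈ Set.Ioi (0:ℝ), 0 < φ' s := by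
  intro s hs
  simp only [Set.mem_Ioi] at hs
  by_contra hle
  push_neg at hle
  have key : ∀ ε ∈ Set.Ioo (0:ℝ) s, φ s ≤ φ ε := by
    intro ε hε
    obtain ⟨hε0, hεs⟩ := hε
    obtain ⟨ξ, hξ, hξeq⟩ := exists_hasDerivAt_eq_slope φ φ' hεs
      (hcont.mono (fun x hx => le_trans hε0.le hx.1) : ContinuousOn φ (Set.Icc ε s))
      (fun x hx => hd1 x (lt_trans hε0 hx.1))
    have hξ0 : (0:ℝ) < ξ := lt_trans hε0 hξ.1
    have h2 : (φ s - φ ε) / (s - ε) ≤ 0 :=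
      hξeq ▸ le_trans (phi'_mono hd1 hconv ξ hξ0 s (Set.mem_Ioi.2 hs) hξ.2.le) hle
    have hden : (0:ℝ) < s - ε := by linarith
    rcases div_nonpos_iff.mp h2 with ⟨h3, h4⟩ | ⟨h3, _⟩ <;> linarith
  have htend : Filter.Tendsto φ (nhdsWithin 0 (Set.Ioi 0)) (nhds 0) := by
    have h0 : ContinuousWithinAt φ (Set.Ici 0) 0 := hcont 0 Set.self_mem_Ici
    have h1 := h0.tendsto
    rw [hφ0] at h1
    exact h1.mono_left (nhdsWithin_mono 0 Set.Ioi_subset_Ici_self)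
  have hfin : φ s ≤ 0 := by
    refine ge_of_tendsto htend ?_
    filter_upwards [Ioo_mem_nhdsGT_of_mem (Set.left_mem_Ico.2 hs)] with ε hε
      using key ε hε
  exact absurd (hpos s (Set.mem_Ioi.2 hs)) (not_lt.2 hfin)

end Aux
section Aux2
variable {φ' φ'' : ℝ → ℝ} {c₀ C₀ : ℝ}

/-- upper power bound: `φ'(y) ≤ (y/x)^{C₀} φ'(x)` for `0 < x ≤ y`. -/
lemma ratio_upper (hC₀ : 0 < C₀)
    (hd2 : ∀ s ∈ Set.Ioi (0:ℝ), HasDerivAt φ' (φ'' s) s)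
    (hub : ∀ s ∈ Set.Ioi (0:ℝ), φ'' s * s ≤ C₀ * φ' s) :
    ∀ x y : ℝ, 0 < x → x ≤ y → φ' y ≤ (y/x) ^ C₀ * φ' x := by
  intro x y hx hxy
  have hy : (0:ℝ) < y := lt_of_lt_of_le hx hxy
  set F : ℝ → ℝ := fun s => φ' s / s ^ C₀ with hF
  have hderiv : ∀ s : ℝ, 0 < s →
      HasDerivAt F ((φ'' s * s ^ C₀ - φ' s * (C₀ * s ^ (C₀ - 1))) / (s ^ C₀) ^ 2) s := by
    intro s hs
    exact (hd2 s hs).div (Real.hasDerivAt_rpow_const (Or.inl hs.ne'))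
      (Real.rpow_pos_of_pos hs C₀).ne'
  have hanti : AntitoneOn F (Set.Icc x y) := by
    apply antitoneOn_of_deriv_nonpos (convex_Icc x y)
    · intro s hs
      exact (hderiv s (lt_of_lt_of_le hx hs.1)).continuousAt.continuousWithinAt
    · intro s hs
      rw [interior_Icc] at hs
      exact (hderiv s (lt_trans hx hs.1)).differentiableAt.differentiableWithinAt
    · intro s hs
      rw [interior_Icc] at hs
      have hs0 : (0:ℝ) < s := lt_trans hx hs.1
      rw [(hderiv s hs0).deriv]
      apply div_nonpos_of_nonpos_of_nonneg _ (sq_nonneg _)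
      have hsplit : s ^ C₀ = s * s ^ (C₀ - 1) := by
        calc s ^ C₀ = s ^ (1 + (C₀ - 1)) := by ring_nf
          _ = s ^ (1:ℝ) * s ^ (C₀ - 1) := Real.rpow_add hs0 _ _
          _ = s * s ^ (C₀ - 1) := by rw [Real.rpow_one]
      rw [hsplit]
      have := hub s (Set.mem_Ioi.2 hs0)
      have hpow : (0:ℝ) < s ^ (C₀ - 1) := Real.rpow_pos_of_pos hs0 _
      nlinarith
  have hFyx := hanti ⟨le_refl x, hxy⟩ ⟨hxy, le_refl y⟩ hxy
  -- F y ≤ F x : φ' y / y^C₀ ≤ φ' x / x^C₀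
  have hxp : (0:ℝ) < x ^ C₀ := Real.rpow_pos_of_pos hx _
  have hyp : (0:ℝ) < y ^ C₀ := Real.rpow_pos_of_pos hy _
  have hdiv : (y/x) ^ C₀ = y ^ C₀ / x ^ C₀ := Real.div_rpow hy.le hx.le C₀
  rw [hdiv]
  rw [div_le_div_iff₀ hyp hxp] at hFyx
  rw [div_mul_eq_mul_div, le_div_iff₀ hxp]
  linarith

end Aux2
section Aux3
variable {φ' φ'' : ℝ → ℝ} {c₀ C₀ : ℝ}

lemma ratio_lower
    (hd2 : ∀ s ∈ Set.Ioi (0:ℝ), HasDerivAt φ' (φ'' s) s)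
    (hlb : ∀ s ∈ Set.Ioi (0:ℝ), c₀ * φ' s ≤ φ'' s * s) :
    ∀ x y : ℝ, 0 < x → x ≤ y → (y/x) ^ c₀ * φ' x ≤ φ' y := by
  intro x y hx hxy
  have hy : (0:ℝ) < y := lt_of_lt_of_le hx hxy
  set F : ℝ → ℝ := fun s => φ' s / s ^ c₀ with hF
  have hderiv : ∀ s : ℝ, 0 < s →
      HasDerivAt F ((φ'' s * s ^ c₀ - φ' s * (c₀ * s ^ (c₀ - 1))) / (s ^ c₀) ^ 2) s := by
    intro s hs
    exact (hd2 s hs).div (Real.hasDerivAt_rpow_const (Or.inl hs.ne'))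
      (Real.rpow_pos_of_pos hs c₀).ne'
  have hmono : MonotoneOn F (Set.Icc x y) := by
    apply monotoneOn_of_deriv_nonneg (convex_Icc x y)
    · intro s hs
      exact (hderiv s (lt_of_lt_of_le hx hs.1)).continuousAt.continuousWithinAt
    · intro s hs
      rw [interior_Icc] at hs
      exact (hderiv s (lt_trans hx hs.1)).differentiableAt.differentiableWithinAt
    · intro s hs
      rw [interior_Icc] at hs
      have hs0 : (0:ℝ) < s := lt_trans hx hs.1
      rw [(hderiv s hs0).deriv]
      apply div_nonneg _ (sq_nonneg _)
      have hsplit : s ^ c₀ = s * s ^ (c₀ - 1) := by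
        calc s ^ c₀ = s ^ (1 + (c₀ - 1)) := by ring_nf
          _ = s ^ (1:ℝ) * s ^ (c₀ - 1) := Real.rpow_add hs0 _ _
          _ = s * s ^ (c₀ - 1) := by rw [Real.rpow_one]
      rw [hsplit]
      have := hlb s (Set.mem_Ioi.2 hs0)
      have hpow : (0:ℝ) < s ^ (c₀ - 1) := Real.rpow_pos_of_pos hs0 _
      nlinarith
  have hFxy := hmono ⟨le_refl x, hxy⟩ ⟨hxy, le_refl y⟩ hxy
  have hxp : (0:ℝ) < x ^ c₀ := Real.rpow_pos_of_pos hx _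
  have hyp : (0:ℝ) < y ^ c₀ := Real.rpow_pos_of_pos hy _
  rw [Real.div_rpow hy.le hx.le c₀]
  rw [div_le_div_iff₀ hxp hyp] at hFxy
  rw [div_mul_eq_mul_div, div_le_iff₀ hxp]
  linarith

end Aux3

private lemma comb_upper {C₀ P u v D Mv : ℝ} (hC₀ : 0 ≤ C₀) (hP : 0 ≤ P)
    (hu : 0 ≤ u) (hv : 0 ≤ v) (hD : D ≤ 2*C₀*(P*u)) (hM : Mv ≤ 3*(P*v)) :
    D + Mv ≤ (2*C₀+13)*(P*(u+2*v)) := by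
  nlinarith [mul_nonneg hP hu, mul_nonneg hP hv,
    mul_nonneg (mul_nonneg hC₀ hP) hv, mul_nonneg (mul_nonneg hC₀ hP) hu]

private lemma comb_lower {m P u v D Mv : ℝ} (hm0 : 0 ≤ m) (hP : 0 ≤ P)
    (hu : 0 ≤ u) (hv : 0 ≤ v) (hD : m*(P*u) ≤ D) (hM : P*v ≤ Mv) :
    (min m 1)/2*(P*(u+2*v)) ≤ D + Mv := by
  have h1 : min m 1 ≤ m := min_le_left _ _
  have h2 : min m 1 ≤ 1 := min_le_right _ _
  have h0 : 0 ≤ min m 1 := le_min hm0 zero_le_one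
  nlinarith [mul_le_mul_of_nonneg_right h1 (mul_nonneg hP hu),
    mul_le_mul_of_nonneg_right h2 (mul_nonneg hP hv),
    mul_nonneg (mul_nonneg h0 hP) hu]

private lemma comb2_upper {C₀ P u v w S : ℝ} (hC₀ : 0 ≤ C₀) (hP : 0 ≤ P)
    (hu : 0 ≤ u) (hv : 0 ≤ v) (hw : w ≤ 4*(u+2*v))
    (hS : S ≤ 3*(P*w) + P*v) : S ≤ (2*C₀+13)*(P*(u+2*v)) := by
  nlinarith [mul_le_mul_of_nonneg_left hw hP, mul_nonneg hP hu, mul_nonneg hP hv,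
    mul_nonneg (mul_nonneg hC₀ hP) hu, mul_nonneg (mul_nonneg hC₀ hP) hv]

private lemma comb2_lower {q P u v w D Mv : ℝ} (hq : 0 ≤ q) (hP : 0 ≤ P)
    (hT : u+2*v ≤ 4*w) (hD : q*(P*w)/2 ≤ D) (hM : 0 ≤ Mv) :
    q/8*(P*(u+2*v)) ≤ D + Mv := by
  nlinarith [mul_le_mul_of_nonneg_left hT (mul_nonneg hq hP)]

section Aux4
variable {φ' φ'' : ℝ → ℝ} {c₀ C₀ : ℝ}

/-- The scalar core inequality. -/
lemma core_scalar (hc₀ : 0 < c₀) (hC₀ : 0 < C₀)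
    (mono : ∀ x ∈ Set.Ioi (0:ℝ), ∀ y ∈ Set.Ioi (0:ℝ), x ≤ y → φ' x ≤ φ' y)
    (pos : ∀ s ∈ Set.Ioi (0:ℝ), 0 < φ' s)
    (hd2 : ∀ s ∈ Set.Ioi (0:ℝ), HasDerivAt φ' (φ'' s) s)
    (hφ'' : ∀ s ∈ Set.Ioi (0:ℝ), c₀ * φ' s ≤ φ'' s * s ∧ φ'' s * s ≤ C₀ * φ' s)
    (rup : ∀ x y : ℝ, 0 < x → x ≤ y → φ' y ≤ (y/x) ^ C₀ * φ' x)
    (rlo : ∀ x y : ℝ, 0 < x → x ≤ y → (y/x) ^ c₀ * φ' x ≤ φ' y)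
    {α β I : ℝ} (hβ : 0 < β) (hβα : β ≤ α) (hI : |I| ≤ α * β) :
    min (min (c₀/(4:ℝ)^C₀) 1 / 2) ((1 - ((2:ℝ)^c₀)⁻¹)/8) *
        (φ' α / α * ((α-β)^2 + 2*(α*β - I)))
      ≤ φ' α * α + φ' β * β - (φ' α/α + φ' β/β) * I ∧
    φ' α * α + φ' β * β - (φ' α/α + φ' β/β) * I
      ≤ (2*C₀+13) * (φ' α / α * ((α-β)^2 + 2*(α*β - I))) := by
  have hα : 0 < α := lt_of_lt_of_le hβ hβα
  set K := (4:ℝ)^C₀ with hKdef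
  set k := (2:ℝ)^c₀ with hkdef
  have hK0 : 0 < K := Real.rpow_pos_of_pos (by norm_num) _
  have hK1 : 1 ≤ K := by
    have := Real.rpow_le_rpow_of_exponent_le (by norm_num : (1:ℝ) ≤ 4) hC₀.le
    rwa [Real.rpow_zero] at this
  have hk1 : 1 < k := by
    have := Real.rpow_lt_rpow_of_exponent_lt (by norm_num : (1:ℝ) < 2) hc₀
    rwa [Real.rpow_zero] at this
  have hk0 : 0 < k := lt_trans one_pos hk1
  have hφα : 0 < φ' α := pos α hα
  have hφβ : 0 < φ' β := pos β hβ
  set P := φ' α / α with hPdef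
  set Q := φ' β / β with hQdef
  have hP0 : 0 < P := div_pos hφα hα
  have hQ0 : 0 < Q := div_pos hφβ hβ
  have hPα : P * α = φ' α := div_mul_cancel₀ _ hα.ne'
  have hQβ : Q * β = φ' β := div_mul_cancel₀ _ hβ.ne'
  set u := (α - β)^2 with hudef
  set v := α*β - I with hvdef
  have hIle := (abs_le.1 hI).2
  have hIge := (abs_le.1 hI).1
  have hv : 0 ≤ v := by simp only [hvdef]; linarith
  have hu : 0 ≤ u := sq_nonneg _
  have hv2 : v ≤ 2*(α*β) := by simp only [hvdef]; linarith
  -- key identity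
  have hid : φ' α * α + φ' β * β - (P + Q) * I = (φ' α - φ' β)*(α-β) + (P + Q)*v := by
    rw [← hPα, ← hQβ, hvdef]; ring
  -- doubling at α/2
  have hhalfpos : (0:ℝ) < α/2 := by linarith
  have hratio2 : α / (α/2) = 2 := by field_simp
  have hhalf_up : φ' α ≤ K * φ' (α/2) := by
    have h := rup (α/2) α hhalfpos (by linarith)
    rw [hratio2] at h
    have h24 : (2:ℝ)^C₀ ≤ K := Real.rpow_le_rpow (by norm_num) (by norm_num) hC₀.le
    nlinarith only [h, h24, pos (α/2) hhalfpos]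
  have hhalf_lo : k * φ' (α/2) ≤ φ' α := by
    have h := rlo (α/2) α hhalfpos (by linarith)
    rwa [hratio2] at h
  rcases le_or_gt (α/2) β with hcase | hcase
  · -- Case 1 : α/2 ≤ β
    have hQ2P : Q ≤ 2*P := by
      have e1 : Q*(β*α) = φ' β * α := by rw [← hQβ]; ring
      have e2 : (2*P)*(β*α) = 2*φ' α*β := by rw [← hPα]; ring
      have hmul : Q*(β*α) ≤ (2*P)*(β*α) := by
        rw [e1, e2]
        have h1 : φ' β * α ≤ φ' α * α :=
          mul_le_mul_of_nonneg_right (mono β hβ α hα hβα) hα.le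
        have h2 : φ' α * α ≤ φ' α * (2*β) :=
          mul_le_mul_of_nonneg_left (by linarith) hφα.le
        linarith only [h1, h2]
      exact le_of_mul_le_mul_right hmul (by positivity)
    -- bounds on D := (φ' α - φ' β)*(α-β)
    have hD_bounds : (φ' α - φ' β)*(α-β) ≤ 2*C₀*(P*u) ∧
        (c₀/K)*(P*u) ≤ (φ' α - φ' β)*(α-β) := by
      rcases eq_or_lt_of_le hβα with heq | hlt
      · subst heq
        constructor <;> simp [hudef] <;> positivity
      · have hcφ' : ContinuousOn φ' (Set.Icc β α) := fun s hs =>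
          ((hd2 s (Set.mem_Ioi.2 (lt_of_lt_of_le hβ hs.1))).continuousAt).continuousWithinAt
        obtain ⟨ξ, hξmem, hξeq⟩ := exists_hasDerivAt_eq_slope φ' φ'' hlt hcφ'
          (fun x hx => hd2 x (Set.mem_Ioi.2 (lt_trans hβ hx.1)))
        have hξ0 : 0 < ξ := lt_trans hβ hξmem.1
        have hDξ : φ' α - φ' β = φ'' ξ * (α - β) := by
          rw [hξeq, div_mul_cancel₀ _ (sub_ne_zero.2 (ne_of_gt hlt))]
        have hφξα : φ' ξ ≤ φ' α := mono ξ hξ0 α hα hξmem.2.le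
        have hφhξ : φ' (α/2) ≤ φ' ξ := mono (α/2) hhalfpos ξ hξ0 (by linarith [hξmem.1])
        have hub := (hφ'' ξ hξ0).2
        have hlb := (hφ'' ξ hξ0).1
        have hφξ0 : 0 < φ' ξ := pos ξ hξ0
        have hξ''0 : 0 < φ'' ξ := by
          rcases le_or_gt (φ'' ξ) 0 with h | h
          · exfalso
            have h2 : φ'' ξ * ξ ≤ 0 := mul_nonpos_of_nonpos_of_nonneg h hξ0.le
            nlinarith only [h2, mul_pos hc₀ hφξ0, hlb]
          · exact h
        have hξα2 : α ≤ 2*ξ := by linarith [hξmem.1]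
        have hξα : ξ ≤ α := hξmem.2.le
        have hup2 : φ'' ξ ≤ 2*C₀*P := by
          have hmul : φ'' ξ * α ≤ (2*C₀*P)*α := by
            rw [show (2*C₀*P)*α = 2*C₀*(P*α) by ring, hPα]
            have e1 : 0 ≤ φ'' ξ * (2*ξ - α) := mul_nonneg hξ''0.le (by linarith)
            have e2 : C₀ * φ' ξ ≤ C₀ * φ' α := mul_le_mul_of_nonneg_left hφξα hC₀.le
            linarith only [e1, e2, hub]
          exact le_of_mul_le_mul_right hmul hα
        have hφξK : φ' α ≤ K * φ' ξ :=
          le_trans hhalf_up (mul_le_mul_of_nonneg_left hφhξ hK0.le)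
        have hlo2 : (c₀/K)*P ≤ φ'' ξ := by
          have hmul : ((c₀/K)*P)*(α*K) ≤ φ'' ξ*(α*K) := by
            rw [show ((c₀/K)*P)*(α*K) = c₀*(P*α)*(K/K) by ring, div_self hK0.ne',
              mul_one, hPα]
            have e1 : c₀ * φ' α ≤ c₀ * (K * φ' ξ) := mul_le_mul_of_nonneg_left hφξK hc₀.le
            have e2 : (c₀ * φ' ξ) * K ≤ (φ'' ξ * ξ) * K := mul_le_mul_of_nonneg_right hlb hK0.le
            have e3 : 0 ≤ φ'' ξ * ((α - ξ) * K) :=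
              mul_nonneg hξ''0.le (mul_nonneg (by linarith) hK0.le)
            linarith only [e1, e2, e3]
          exact le_of_mul_le_mul_right hmul (by positivity)
        constructor
        · calc (φ' α - φ' β)*(α-β) = φ'' ξ * u := by rw [hDξ, hudef]; ring
            _ ≤ (2*C₀*P) * u := mul_le_mul_of_nonneg_right hup2 hu
            _ = 2*C₀*(P*u) := by ring
        · calc (c₀/K)*(P*u) = ((c₀/K)*P)*u := by ring
            _ ≤ φ'' ξ * u := mul_le_mul_of_nonneg_right hlo2 hu
            _ = (φ' α - φ' β)*(α-β) := by rw [hDξ, hudef]; ring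
    constructor
    · -- lower bound
      have hPvQv : P*v ≤ (P+Q)*v := by
        have : (P+Q)*v - P*v = Q*v := by ring
        linarith [mul_nonneg hQ0.le hv]
      have hlow := comb_lower (by positivity : (0:ℝ) ≤ c₀/K) hP0.le hu hv hD_bounds.2 hPvQv
      calc min (min (c₀/K) 1 / 2) ((1-k⁻¹)/8) * (P * (u+2*v))
          ≤ (min (c₀/K) 1)/2 * (P * (u+2*v)) :=
            mul_le_mul_of_nonneg_right (min_le_left _ _) (by positivity)
        _ ≤ (φ' α - φ' β)*(α-β) + (P+Q)*v := hlow
        _ = φ' α * α + φ' β * β - (P + Q) * I := hid.symm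
    · -- upper bound
      rw [hid]
      have hPQ3 : (P+Q)*v ≤ 3*(P*v) := by
        calc (P+Q)*v ≤ (3*P)*v := mul_le_mul_of_nonneg_right (by linarith) hv
          _ = 3*(P*v) := by ring
      exact comb_upper hC₀.le hP0.le hu hv hD_bounds.1 hPQ3
  · -- Case 2 : β < α/2
    have hαβ2 : α/2 ≤ α - β := by linarith
    have hφβα : φ' β ≤ φ' α := mono β hβ α hα hβα
    have hw1 : α^2 ≤ 4*(u+2*v) := by
      have h1 : (α/2)^2 ≤ (α-β)^2 := pow_le_pow_left₀ (by linarith) (by linarith) 2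
      have hv' : (0:ℝ) ≤ α*β - I := by linarith only [hIle]
      simp only [hudef, hvdef]
      nlinarith only [h1, hv']
    have hw2 : u+2*v ≤ 4*α^2 := by
      have h1 : β*β ≤ α*β := mul_le_mul_of_nonneg_right hβα hβ.le
      have h2 : α*β ≤ α*α := mul_le_mul_of_nonneg_left hβα hα.le
      simp only [hudef, hvdef]
      nlinarith only [h1, h2, hIge]
    have hPw : P*α^2 = φ' α * α := by rw [← hPα]; ring
    constructor
    · -- lower
      rw [hid]
      have hφβh : φ' β ≤ φ' (α/2) := mono β hβ (α/2) hhalfpos hcase.le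
      have hkβ : k * φ' β ≤ φ' α :=
        le_trans (mul_le_mul_of_nonneg_left hφβh hk0.le) hhalf_lo
      have hβinv : φ' β ≤ k⁻¹ * φ' α := by
        rw [← div_eq_inv_mul, le_div_iff₀ hk0]; linarith [hkβ]
      set q := 1 - k⁻¹ with hqdef
      have hkinv1 : k⁻¹ < 1 := by
        rw [inv_lt_one_iff₀]; right; exact hk1
      have hq0 : 0 ≤ q := by simp only [hqdef]; linarith
      have hD_lo : q*(P*α^2)/2 ≤ (φ' α - φ' β)*(α-β) := by
        rw [hPw]
        have h1 : q * φ' α ≤ φ' α - φ' β := by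
          have hexp : q * φ' α = φ' α - k⁻¹ * φ' α := by simp only [hqdef]; ring
          rw [hexp]
          linarith [hβinv]
        have h2 : 0 ≤ q * φ' α := mul_nonneg hq0 hφα.le
        calc q*(φ' α * α)/2 = (q * φ' α) * (α/2) := by ring
          _ ≤ (φ' α - φ' β)*(α-β) := mul_le_mul h1 hαβ2 hhalfpos.le (by linarith)
      have := comb2_lower hq0 hP0.le hw2 hD_lo
        (by positivity : (0:ℝ) ≤ (P+Q)*v)
      calc min (min (c₀/K) 1 / 2) (q/8) * (P * (u+2*v))
          ≤ q/8 * (P * (u+2*v)) :=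
            mul_le_mul_of_nonneg_right (min_le_right _ _) (by positivity)
        _ ≤ (φ' α - φ' β)*(α-β) + (P+Q)*v := this
    · -- upper
      rw [hid]
      have hDu : (φ' α - φ' β)*(α-β) ≤ P*α^2 := by
        rw [hPw]
        exact mul_le_mul (by linarith) (by linarith) (by linarith) hφα.le
      have hQv : Q*v ≤ 2*(P*α^2) := by
        rw [hPw]
        calc Q*v ≤ Q*(2*(α*β)) := mul_le_mul_of_nonneg_left hv2 hQ0.le
          _ = 2*α*(Q*β) := by ring
          _ = 2*α*φ' β := by rw [hQβ]
          _ ≤ 2*(φ' α * α) := by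
            have := mul_le_mul_of_nonneg_left hφβα (by linarith : (0:ℝ) ≤ 2*α)
            linarith [this]
      have hexp : (φ' α - φ' β)*(α-β) + (P + Q)*v = (φ' α - φ' β)*(α-β) + P*v + Q*v := by
        ring
      refine comb2_upper hC₀.le hP0.le hu hv hw1 ?_
      rw [hexp]
      linarith only [hDu, hQv, hexp]
end Aux4


section Aux5
variable {φ' : ℝ → ℝ} {C₀ : ℝ}

/-- quadrupling bound -/
lemma phi'_quad (hC₀ : 0 < C₀)
    (pos : ∀ s ∈ Set.Ioi (0:ℝ), 0 < φ' s)
    (rup : ∀ x y : ℝ, 0 < x → x ≤ y → φ' y ≤ (y/x) ^ C₀ * φ' x) :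
    ∀ x y : ℝ, 0 < x → x ≤ y → y ≤ 4*x → φ' y ≤ (4:ℝ)^C₀ * φ' x := by
  intro x y hx hxy hy4
  have h1 := rup x y hx hxy
  have h2 : (y/x)^C₀ ≤ (4:ℝ)^C₀ :=
    Real.rpow_le_rpow (div_nonneg (by linarith) hx.le) (by rw [div_le_iff₀ hx]; linarith) hC₀.le
  have h3 := mul_le_mul_of_nonneg_right h2 (pos x (Set.mem_Ioi.2 hx)).le
  linarith

/-- Step D: phiShift comparable to `φ'(α+t) t²/(α+t)`. -/
lemma phiShift_bounds (hC₀ : 0 < C₀)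
    (mono : ∀ x ∈ Set.Ioi (0:ℝ), ∀ y ∈ Set.Ioi (0:ℝ), x ≤ y → φ' x ≤ φ' y)
    (pos : ∀ s ∈ Set.Ioi (0:ℝ), 0 < φ' s)
    (rup : ∀ x y : ℝ, 0 < x → x ≤ y → φ' y ≤ (y/x) ^ C₀ * φ' x)
    {α t : ℝ} (hα : 0 ≤ α) (ht : 0 ≤ t) :
    phiShift φ' α t ≤ φ' (α+t)*t^2/(α+t) ∧
    φ' (α+t)*t^2/(α+t) ≤ 4*(4:ℝ)^C₀ * phiShift φ' α t := by
  set K := (4:ℝ)^C₀ with hK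
  have hK0 : 0 < K := Real.rpow_pos_of_pos (by norm_num) _
  rcases eq_or_lt_of_le ht with rfl | ht0
  · simp [phiShift]
  set g : ℝ → ℝ := fun s => φ' (α + s) * s / (α + s) with hg
  have hg0 : g 0 = 0 := by simp [hg]
  have hgnonneg : ∀ s, 0 ≤ s → 0 ≤ g s := by
    intro s hs
    rcases eq_or_lt_of_le hs with rfl | hs0
    · rw [hg0]
    · have hαs : 0 < α + s := by linarith
      have := pos (α+s) (Set.mem_Ioi.2 hαs)
      simp only [hg]
      positivity
  have hgmono : MonotoneOn g (Set.Icc 0 t) := by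
    intro s₁ h₁ s₂ h₂ h12
    rcases eq_or_lt_of_le h₁.1 with rfl | hs₁
    · rw [hg0]; exact hgnonneg s₂ h₂.1
    · have hαs₁ : 0 < α + s₁ := by linarith
      have hαs₂ : 0 < α + s₂ := by linarith
      have e1 : g s₁ = φ' (α+s₁) * (s₁/(α+s₁)) := by simp only [hg]; ring
      have e2 : g s₂ = φ' (α+s₂) * (s₂/(α+s₂)) := by simp only [hg]; ring
      rw [e1, e2]
      apply mul_le_mul
      · exact mono (α+s₁) (Set.mem_Ioi.2 hαs₁) (α+s₂) (Set.mem_Ioi.2 hαs₂) (by linarith)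
      · rw [div_le_div_iff₀ hαs₁ hαs₂]; nlinarith only [hα, h12, hs₁]
      · positivity
      · exact (pos (α+s₂) (Set.mem_Ioi.2 hαs₂)).le
  have huIcc : Set.uIcc (0:ℝ) t = Set.Icc 0 t := Set.uIcc_of_le ht
  have hint : IntervalIntegrable g MeasureTheory.volume 0 t := by
    apply MonotoneOn.intervalIntegrable; rwa [huIcc]
  have hth : 0 ≤ t/2 := by linarith
  have hint1 : IntervalIntegrable g MeasureTheory.volume 0 (t/2) := by
    apply MonotoneOn.intervalIntegrable
    rw [Set.uIcc_of_le hth]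
    exact hgmono.mono (Set.Icc_subset_Icc le_rfl (by linarith))
  have hint2 : IntervalIntegrable g MeasureTheory.volume (t/2) t := by
    apply MonotoneOn.intervalIntegrable
    rw [Set.uIcc_of_le (by linarith : t/2 ≤ t)]
    exact hgmono.mono (Set.Icc_subset_Icc (by linarith) le_rfl)
  have hαt : 0 < α + t := by linarith
  have hαt2 : 0 < α + t/2 := by linarith
  constructor
  · -- upper bound
    have hgt : ∀ s ∈ Set.Icc (0:ℝ) t, g s ≤ g t := fun s hs =>
      hgmono hs ⟨ht, le_rfl⟩ hs.2
    have h := intervalIntegral.integral_mono_on ht hint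
      (intervalIntegrable_const (c := g t)) hgt
    rw [intervalIntegral.integral_const, smul_eq_mul] at h
    have : phiShift φ' α t = ∫ s in (0:ℝ)..t, g s := rfl
    rw [this]
    refine le_trans h (le_of_eq ?_)
    simp only [hg]
    field_simp
    ring
  · -- lower bound
    have hsplit := intervalIntegral.integral_add_adjacent_intervals hint1 hint2
    have h1 : 0 ≤ ∫ s in (0:ℝ)..(t/2), g s :=
      intervalIntegral.integral_nonneg hth (fun s hs => hgnonneg s hs.1)
    have h2 : (t/2) * g (t/2) ≤ ∫ s in (t/2)..t, g s := by
      have hgt : ∀ s ∈ Set.Icc (t/2) t, g (t/2) ≤ g s := fun s hs =>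
        hgmono ⟨hth, by linarith⟩ ⟨le_trans hth hs.1, hs.2⟩ hs.1
      have h := intervalIntegral.integral_mono_on (by linarith : t/2 ≤ t)
        (intervalIntegrable_const (c := g (t/2))) hint2 hgt
      rw [intervalIntegral.integral_const, smul_eq_mul] at h
      calc (t/2) * g (t/2) = (t - t/2) * g (t/2) := by ring
        _ ≤ _ := h
    have hlow : (t/2) * g (t/2) ≤ phiShift φ' α t := by
      have : phiShift φ' α t = (∫ s in (0:ℝ)..(t/2), g s) + ∫ s in (t/2)..t, g s := by
        rw [hsplit]; rfl
      rw [this]; linarith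
    -- φ'(α+t) ≤ K φ'(α+t/2)
    have hquad : φ' (α+t) ≤ K * φ' (α+t/2) :=
      phi'_quad hC₀ pos rup (α+t/2) (α+t) hαt2 (by linarith) (by linarith)
    have hgval : g (t/2) = φ' (α+t/2) * (t/2) / (α+t/2) := rfl
    have hkey : φ' (α+t)*t^2/(α+t) ≤ 4*K*((t/2) * g (t/2)) := by
      rw [hgval]
      have e : 4*K*((t/2) * (φ' (α+t/2) * (t/2) / (α+t/2))) = K*φ' (α+t/2)*t^2/(α+t/2) := by
        field_simp; ring
      rw [e]
      rw [div_le_div_iff₀ hαt hαt2]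
      have b1 : φ' (α+t)*t^2 ≤ K*φ' (α+t/2)*t^2 :=
        mul_le_mul_of_nonneg_right hquad (by positivity)
      have f1 := mul_le_mul_of_nonneg_right b1 hαt2.le
      have f2 : K*φ' (α+t/2)*t^2*(α+t/2) ≤ K*φ' (α+t/2)*t^2*(α+t) := by
        apply mul_le_mul_of_nonneg_left (by linarith : α+t/2 ≤ α+t)
        have := (pos (α+t/2) (Set.mem_Ioi.2 hαt2)).le
        positivity
      linarith only [f1, f2]
    calc φ' (α+t)*t^2/(α+t) ≤ 4*K*((t/2) * g (t/2)) := hkey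
      _ ≤ 4*K*phiShift φ' α t := by
        apply mul_le_mul_of_nonneg_left hlow (by positivity)
end Aux5
section Aux6
variable {φ' : ℝ → ℝ} {C₀ : ℝ}

/-- Step B: `φ'(α)/α t² ≂ φ'(α+t)t²/(α+t)` when `0 ≤ t ≤ 2α`. -/
lemma stepB (hC₀ : 0 < C₀)
    (mono : ∀ x ∈ Set.Ioi (0:ℝ), ∀ y ∈ Set.Ioi (0:ℝ), x ≤ y → φ' x ≤ φ' y)
    (pos : ∀ s ∈ Set.Ioi (0:ℝ), 0 < φ' s)
    (quad : ∀ x y : ℝ, 0 < x → x ≤ y → y ≤ 4*x → φ' y ≤ (4:ℝ)^C₀ * φ' x)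
    {α t : ℝ} (hα : 0 < α) (ht : 0 ≤ t) (ht2 : t ≤ 2*α) :
    φ' α/α*t^2 ≤ 3*(φ' (α+t)*t^2/(α+t)) ∧
    φ' (α+t)*t^2/(α+t) ≤ (4:ℝ)^C₀*(φ' α/α*t^2) := by
  have hαt : 0 < α + t := by linarith
  have hm : φ' α ≤ φ' (α+t) := mono α (Set.mem_Ioi.2 hα) (α+t) (Set.mem_Ioi.2 hαt) (by linarith)
  have hq : φ' (α+t) ≤ (4:ℝ)^C₀ * φ' α := quad α (α+t) hα (by linarith) (by linarith)
  have hφα := pos α (Set.mem_Ioi.2 hα)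
  have hφαt := pos (α+t) (Set.mem_Ioi.2 hαt)
  have hK0 : (0:ℝ) < (4:ℝ)^C₀ := Real.rpow_pos_of_pos (by norm_num) _
  constructor
  · rw [show 3*(φ' (α+t)*t^2/(α+t)) = 3*(φ' (α+t)*t^2)/(α+t) by ring,
      show φ' α/α*t^2 = φ' α*t^2/α by ring, div_le_div_iff₀ hα hαt]
    have f1 : φ' α*t^2*(α+t) ≤ φ' (α+t)*t^2*(α+t) := by
      apply mul_le_mul_of_nonneg_right (mul_le_mul_of_nonneg_right hm (sq_nonneg t)) hαt.le
    have f2 : φ' (α+t)*t^2*(α+t) ≤ φ' (α+t)*t^2*(3*α) := by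
      apply mul_le_mul_of_nonneg_left (by linarith) (by positivity)
    nlinarith only [f1, f2]
  · rw [show (4:ℝ)^C₀*(φ' α/α*t^2) = (4:ℝ)^C₀*(φ' α*t^2)/α by ring,
      div_le_div_iff₀ hαt hα]
    have f1 : φ' (α+t)*t^2*α ≤ ((4:ℝ)^C₀*φ' α)*t^2*α := by
      apply mul_le_mul_of_nonneg_right (mul_le_mul_of_nonneg_right hq (sq_nonneg t)) hα.le
    have f2 : ((4:ℝ)^C₀*φ' α)*t^2*α ≤ ((4:ℝ)^C₀*φ' α)*t^2*(α+t) := by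
      apply mul_le_mul_of_nonneg_left (by linarith) (by positivity)
    nlinarith only [f1, f2]

/-- Step C: shift transfer. -/
lemma stepC (hC₀ : 0 < C₀)
    (mono : ∀ x ∈ Set.Ioi (0:ℝ), ∀ y ∈ Set.Ioi (0:ℝ), x ≤ y → φ' x ≤ φ' y)
    (pos : ∀ s ∈ Set.Ioi (0:ℝ), 0 < φ' s)
    (quad : ∀ x y : ℝ, 0 < x → x ≤ y → y ≤ 4*x → φ' y ≤ (4:ℝ)^C₀ * φ' x)
    {γ δ t : ℝ} (hγ : 0 ≤ γ) (hδ : 0 ≤ δ) (ht : 0 < t)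
    (h1 : γ ≤ δ + t) (h2 : δ ≤ γ + t) :
    φ' (γ+t)*t^2/(γ+t) ≤ 2*(4:ℝ)^C₀*(φ' (δ+t)*t^2/(δ+t)) := by
  have hγt : 0 < γ + t := by linarith
  have hδt : 0 < δ + t := by linarith
  have hK0 : (0:ℝ) < (4:ℝ)^C₀ := Real.rpow_pos_of_pos (by norm_num) _
  have hK1 : (1:ℝ) ≤ (4:ℝ)^C₀ := by
    have := Real.rpow_le_rpow_of_exponent_le (by norm_num : (1:ℝ) ≤ 4) hC₀.le
    rwa [Real.rpow_zero] at this
  have hφδt := pos (δ+t) (Set.mem_Ioi.2 hδt)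
  have hφγt := pos (γ+t) (Set.mem_Ioi.2 hγt)
  have hup : φ' (γ+t) ≤ (4:ℝ)^C₀ * φ' (δ+t) := by
    rcases le_or_gt (γ+t) (δ+t) with hle | hlt
    · have := mono (γ+t) (Set.mem_Ioi.2 hγt) (δ+t) (Set.mem_Ioi.2 hδt) hle
      nlinarith only [this, hφδt, hK1]
    · exact quad (δ+t) (γ+t) hδt hlt.le (by linarith)
  rw [show 2*(4:ℝ)^C₀*(φ' (δ+t)*t^2/(δ+t)) = 2*(4:ℝ)^C₀*(φ' (δ+t)*t^2)/(δ+t) by ring,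
    div_le_div_iff₀ hγt hδt]
  have f1 : φ' (γ+t)*t^2*(δ+t) ≤ ((4:ℝ)^C₀*φ' (δ+t))*t^2*(δ+t) := by
    apply mul_le_mul_of_nonneg_right (mul_le_mul_of_nonneg_right hup (sq_nonneg t)) hδt.le
  have f2 : ((4:ℝ)^C₀*φ' (δ+t))*t^2*(δ+t) ≤ ((4:ℝ)^C₀*φ' (δ+t))*t^2*(2*(γ+t)) := by
    apply mul_le_mul_of_nonneg_left (by linarith) (by positivity)
  nlinarith only [f1, f2]
end Aux6


lemma inner_opA_expand {d : ℕ} (φ' : ℝ → ℝ) (a b : EuclideanSpace ℝ (Fin d))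
    (ha : a ≠ 0) (hb : b ≠ 0) :
    ⟪opA φ' a - opA φ' b, a - b⟫ =
      φ' ‖a‖ * ‖a‖ + φ' ‖b‖ * ‖b‖ - (φ' ‖a‖/‖a‖ + φ' ‖b‖/‖b‖) * ⟪a,b⟫ := by
  have hna : ‖a‖ ≠ 0 := norm_ne_zero_iff.2 ha
  have hnb : ‖b‖ ≠ 0 := norm_ne_zero_iff.2 hb
  simp only [opA, if_neg ha, if_neg hb, inner_sub_left, inner_sub_right,
    real_inner_smul_left]
  rw [real_inner_self_eq_norm_mul_norm, real_inner_self_eq_norm_mul_norm,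
    real_inner_comm b a]
  field_simp
  ring

lemma inner_opA_zero {d : ℕ} (φ' : ℝ → ℝ) (a : EuclideanSpace ℝ (Fin d))
    (ha : a ≠ 0) :
    ⟪opA φ' a - opA φ' 0, a - 0⟫ = φ' ‖a‖ / ‖a‖ * ‖a‖^2 := by
  simp only [opA, if_neg ha, eq_self_iff_true, if_true, sub_zero,
    real_inner_smul_left, real_inner_self_eq_norm_mul_norm]
  ring

section VecCore
variable {φ' φ'' : ℝ → ℝ} {c₀ C₀ : ℝ}

lemma vec_core {d : ℕ} (hc₀ : 0 < c₀) (hC₀ : 0 < C₀)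
    (mono : ∀ x ∈ Set.Ioi (0:ℝ), ∀ y ∈ Set.Ioi (0:ℝ), x ≤ y → φ' x ≤ φ' y)
    (pos : ∀ s ∈ Set.Ioi (0:ℝ), 0 < φ' s)
    (hd2 : ∀ s ∈ Set.Ioi (0:ℝ), HasDerivAt φ' (φ'' s) s)
    (hφ'' : ∀ s ∈ Set.Ioi (0:ℝ), c₀ * φ' s ≤ φ'' s * s ∧ φ'' s * s ≤ C₀ * φ' s)
    (rup : ∀ x y : ℝ, 0 < x → x ≤ y → φ' y ≤ (y/x) ^ C₀ * φ' x)
    (rlo : ∀ x y : ℝ, 0 < x → x ≤ y → (y/x) ^ c₀ * φ' x ≤ φ' y)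
    (a b : EuclideanSpace ℝ (Fin d)) (hab : ‖b‖ ≤ ‖a‖) :
    min (min (c₀/(4:ℝ)^C₀) 1 / 2) ((1 - ((2:ℝ)^c₀)⁻¹)/8) * (φ' ‖a‖/‖a‖ * ‖a-b‖^2)
      ≤ ⟪opA φ' a - opA φ' b, a - b⟫ ∧
    ⟪opA φ' a - opA φ' b, a - b⟫ ≤ (2*C₀+13) * (φ' ‖a‖/‖a‖ * ‖a-b‖^2) := by
  set c₁ := min (min (c₀/(4:ℝ)^C₀) 1 / 2) ((1 - ((2:ℝ)^c₀)⁻¹)/8) with hc₁def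
  have hK0 : (0:ℝ) < (4:ℝ)^C₀ := Real.rpow_pos_of_pos (by norm_num) _
  have hk1 : (1:ℝ) < (2:ℝ)^c₀ := by
    have := Real.rpow_lt_rpow_of_exponent_lt (by norm_num : (1:ℝ) < 2) hc₀
    rwa [Real.rpow_zero] at this
  have hkinv : ((2:ℝ)^c₀)⁻¹ < 1 := by
    rw [inv_lt_one_iff₀]; right; exact hk1
  have hc₁0 : 0 ≤ c₁ := by
    apply le_min
    · have h1 : (0:ℝ) < c₀/(4:ℝ)^C₀ := by positivity
      have := lt_min h1 one_pos
      linarith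
    · linarith
  have hc₁1 : c₁ ≤ 1 := by
    have h1 : c₁ ≤ min (c₀/(4:ℝ)^C₀) 1 / 2 := min_le_left _ _
    have h2 : min (c₀/(4:ℝ)^C₀) 1 ≤ 1 := min_le_right _ _
    linarith
  have hC₁1 : (1:ℝ) ≤ 2*C₀+13 := by linarith
  by_cases ha : a = 0
  · have hb0 : b = 0 := norm_le_zero_iff.1 (by rwa [ha, norm_zero] at hab)
    subst ha; subst hb0
    simp
  by_cases hb : b = 0
  · subst hb
    have hα : 0 < ‖a‖ := norm_pos_iff.2 ha
    have hX0 : 0 ≤ φ' ‖a‖/‖a‖*‖a‖^2 := by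
      have := (pos ‖a‖ (Set.mem_Ioi.2 hα)).le
      positivity
    rw [inner_opA_zero φ' a ha, sub_zero]
    constructor
    · nlinarith only [hc₁1, hc₁0, hX0]
    · nlinarith only [hC₁1, hX0]
  · have hα : 0 < ‖a‖ := norm_pos_iff.2 ha
    have hβ : 0 < ‖b‖ := norm_pos_iff.2 hb
    have hI : |⟪a,b⟫| ≤ ‖a‖*‖b‖ := abs_real_inner_le_norm a b
    obtain ⟨h1, h2⟩ := core_scalar hc₀ hC₀ mono pos hd2 hφ'' rup rlo hβ hab hI
    have ht2 : ‖a-b‖^2 = (‖a‖-‖b‖)^2 + 2*(‖a‖*‖b‖ - ⟪a,b⟫) := by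
      rw [norm_sub_sq_real]; ring
    rw [inner_opA_expand φ' a b ha hb, ht2]
    exact ⟨h1, h2⟩

end VecCore

/-- Shifted-function characterization of the monotonicity of the Orlicz operator
(Lemma 4.4 (i), first relation): under condition (C3) there exist constants
`c, C > 0` depending only on the characteristics of `φ` such that
`c φ_{|a|}(|a−b|) ≤ (A(a) − A(b))·(a−b) ≤ C φ_{|a|}(|a−b|)` for all `a, b ∈ ℝ^d`. -/
theorem stmt12 (d : ℕ) (hd : 1 ≤ d) (φ φ' φ'' : ℝ → ℝ) (c₀ C₀ : ℝ)
    (hc₀ : 0 < c₀) (hC₀ : 0 < C₀)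
    (hcont : ContinuousOn φ (Set.Ici 0))
    (hd1 : ∀ s ∈ Set.Ioi (0:ℝ), HasDerivAt φ (φ' s) s)
    (hd2 : ∀ s ∈ Set.Ioi (0:ℝ), HasDerivAt φ' (φ'' s) s)
    (hd2c : ContinuousOn φ'' (Set.Ioi 0))
    (hconv : ConvexOn ℝ (Set.Ioi 0) φ)
    (hpos : ∀ s ∈ Set.Ioi (0:ℝ), 0 < φ s)
    (hφ0 : φ 0 = 0)
    (hlim0 : Filter.Tendsto (fun s => φ s / s) (nhdsWithin 0 (Set.Ioi 0)) (nhds 0))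
    (hliminfty : Filter.Tendsto (fun s => φ s / s) Filter.atTop Filter.atTop)
    (hΔ2 : ∀ s ≥ (0:ℝ), φ (2 * s) ≤ C₀ * φ s)
    (hΔ2conj : ∀ r ≥ (0:ℝ), orliczConj φ (2 * r) ≤ C₀ * orliczConj φ r)
    (hφ'' : ∀ s ∈ Set.Ioi (0:ℝ), c₀ * φ' s ≤ φ'' s * s ∧ φ'' s * s ≤ C₀ * φ' s) :
    ∃ c C : ℝ, 0 < c ∧ 0 < C ∧ ∀ a b : EuclideanSpace ℝ (Fin d),
      c * phiShift φ' ‖a‖ ‖a - b‖ ≤ ⟪opA φ' a - opA φ' b, a - b⟫ ∧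
      ⟪opA φ' a - opA φ' b, a - b⟫ ≤ C * phiShift φ' ‖a‖ ‖a - b‖ := by
  have mono := phi'_mono hd1 hconv
  have pos := phi'_pos hcont hd1 hconv hpos hφ0
  have rup := ratio_upper hC₀ hd2 (fun s hs => (hφ'' s hs).2)
  have rlo := ratio_lower hd2 (fun s hs => (hφ'' s hs).1)
  have quad := phi'_quad hC₀ pos rup
  set K := (4:ℝ)^C₀ with hKdef
  have hK0 : 0 < K := Real.rpow_pos_of_pos (by norm_num) _
  have hK1 : 1 ≤ K := by
    have := Real.rpow_le_rpow_of_exponent_le (by norm_num : (1:ℝ) ≤ 4) hC₀.le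
    rwa [Real.rpow_zero] at this
  have hk1 : (1:ℝ) < (2:ℝ)^c₀ := by
    have := Real.rpow_lt_rpow_of_exponent_lt (by norm_num : (1:ℝ) < 2) hc₀
    rwa [Real.rpow_zero] at this
  have hkinv : ((2:ℝ)^c₀)⁻¹ < 1 := by rw [inv_lt_one_iff₀]; right; exact hk1
  set c₁ := min (min (c₀/K) 1 / 2) ((1 - ((2:ℝ)^c₀)⁻¹)/8) with hc₁def
  have hc₁0 : 0 < c₁ := by
    apply lt_min
    · have : 0 < min (c₀/K) 1 := lt_min (div_pos hc₀ hK0) one_pos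
      linarith
    · linarith
  set C₁ := 2*C₀+13 with hC₁def
  have hC₁0 : (0:ℝ) < C₁ := by rw [hC₁def]; linarith
  refine ⟨c₁/(2*K*K), 24*K*K*C₁, div_pos hc₁0 (by positivity), by positivity, ?_⟩
  intro a b
  have ht0 : (0:ℝ) ≤ ‖a - b‖ := norm_nonneg _
  have hα0 : (0:ℝ) ≤ ‖a‖ := norm_nonneg _
  have hβ0 : (0:ℝ) ≤ ‖b‖ := norm_nonneg _
  have htri : ‖a - b‖ ≤ ‖a‖ + ‖b‖ := norm_sub_le a b
  rcases le_or_gt ‖b‖ ‖a‖ with hba | hba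
  · by_cases ha : a = 0
    · have hb : b = 0 := norm_le_zero_iff.1 (by rwa [ha, norm_zero] at hba)
      subst ha; subst hb
      constructor <;> simp [phiShift]
    · have hαpos : 0 < ‖a‖ := norm_pos_iff.2 ha
      have ht2α : ‖a - b‖ ≤ 2*‖a‖ := by linarith
      obtain ⟨hv1, hv2⟩ := vec_core hc₀ hC₀ mono pos hd2 hφ'' rup rlo a b hba
      rw [← hKdef] at hv1
      rw [← hc₁def] at hv1
      rw [← hC₁def] at hv2
      obtain ⟨hB1, hB2⟩ := stepB hC₀ mono pos quad hαpos ht0 ht2α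
      obtain ⟨hD1, hD2⟩ := phiShift_bounds hC₀ mono pos rup hα0 ht0
      set t := ‖a - b‖
      set P := phiShift φ' ‖a‖ t with hPdef
      set Q := φ' ‖a‖/‖a‖*t^2 with hQdef
      set R := φ' (‖a‖+t)*t^2/(‖a‖+t) with hRdef
      have hQ0 : 0 ≤ Q := by
        have := (pos ‖a‖ (Set.mem_Ioi.2 hαpos)).le
        rw [hQdef]; positivity
      have hR0 : 0 ≤ R := by
        have h1 : 0 < ‖a‖ + t := by linarith
        have := (pos (‖a‖+t) (Set.mem_Ioi.2 h1)).le
        rw [hRdef]; positivity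
      have hP0 : 0 ≤ P := by nlinarith only [hD2, hR0, hK0]
      constructor
      · have hPQ : P ≤ K*Q := le_trans hD1 hB2
        have e1 : c₁/(2*K*K)*P ≤ c₁/(2*K*K)*(K*Q) :=
          mul_le_mul_of_nonneg_left hPQ (by positivity)
        have e2 : c₁/(2*K*K)*(K*Q) ≤ c₁*Q := by
          rw [show c₁/(2*K*K)*(K*Q) = (c₁*Q)*(K/(2*K*K)) by ring]
          have h3 : K/(2*K*K) ≤ 1 := by
            rw [div_le_one (by positivity)]
            nlinarith only [hK1, hK0]
          have h4 := mul_le_mul_of_nonneg_left h3 (mul_nonneg hc₁0.le hQ0)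
          linarith only [h4]
        exact le_trans (le_trans e1 e2) hv1
      · have e1 : C₁*Q ≤ C₁*(3*R) := mul_le_mul_of_nonneg_left hB1 hC₁0.le
        have e2 : C₁*(3*R) ≤ C₁*(3*(4*K*P)) := by
          apply mul_le_mul_of_nonneg_left _ hC₁0.le
          exact mul_le_mul_of_nonneg_left hD2 (by norm_num)
        have e3 : C₁*(3*(4*K*P)) ≤ 24*K*K*C₁*P := by
          nlinarith only [mul_nonneg (mul_nonneg
            (mul_nonneg (by linarith : (0:ℝ) ≤ 2*K-1) (by positivity : (0:ℝ) ≤ 12*K))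
            hC₁0.le) hP0]
        linarith only [hv2, e1, e2, e3]
  · have hβpos : 0 < ‖b‖ := lt_of_le_of_lt hα0 hba
    have htpos : 0 < ‖a - b‖ := by
      have habs := abs_norm_sub_norm_le a b
      have h1 : -(‖a - b‖) ≤ ‖a‖ - ‖b‖ := (abs_le.1 habs).1
      linarith
    have htn : ‖b - a‖ = ‖a - b‖ := norm_sub_rev b a
    obtain ⟨hv1, hv2⟩ := vec_core hc₀ hC₀ mono pos hd2 hφ'' rup rlo b a hba.le
    have hflip : ⟪opA φ' b - opA φ' a, b - a⟫ = ⟪opA φ' a - opA φ' b, a - b⟫ := by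
      rw [← neg_sub (opA φ' a) (opA φ' b), ← neg_sub a b, inner_neg_neg]
    rw [hflip, htn] at hv1 hv2
    rw [← hKdef] at hv1
    rw [← hc₁def] at hv1
    rw [← hC₁def] at hv2
    have ht2β : ‖a - b‖ ≤ 2*‖b‖ := by linarith
    obtain ⟨hB1, hB2⟩ := stepB hC₀ mono pos quad hβpos ht0 ht2β
    obtain ⟨hD1, hD2⟩ := phiShift_bounds hC₀ mono pos rup hα0 ht0
    have habs := abs_norm_sub_norm_le a b
    have hle1 : ‖b‖ ≤ ‖a‖ + ‖a - b‖ := by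
      have h1 : -(‖a - b‖) ≤ ‖a‖ - ‖b‖ := (abs_le.1 habs).1
      linarith
    have hle2 : ‖a‖ ≤ ‖b‖ + ‖a - b‖ := by
      have h1 : ‖a‖ - ‖b‖ ≤ ‖a - b‖ := (abs_le.1 habs).2
      linarith
    have hCβα := stepC hC₀ mono pos quad hβ0 hα0 htpos hle1 hle2
    have hCαβ := stepC hC₀ mono pos quad hα0 hβ0 htpos hle2 hle1
    set t := ‖a - b‖
    set P := phiShift φ' ‖a‖ t with hPdef
    set Qβ := φ' ‖b‖/‖b‖*t^2 with hQdef
    set Rα := φ' (‖a‖+t)*t^2/(‖a‖+t) with hRadef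
    set Rβ := φ' (‖b‖+t)*t^2/(‖b‖+t) with hRbdef
    have hQ0 : 0 ≤ Qβ := by
      have := (pos ‖b‖ (Set.mem_Ioi.2 hβpos)).le
      rw [hQdef]; positivity
    have hRα0 : 0 ≤ Rα := by
      have h1 : 0 < ‖a‖ + t := by linarith
      have := (pos (‖a‖+t) (Set.mem_Ioi.2 h1)).le
      rw [hRadef]; positivity
    have hP0 : 0 ≤ P := by nlinarith only [hD2, hRα0, hK0]
    constructor
    · have hPQ : P ≤ 2*K*(K*Qβ) := by
        calc P ≤ Rα := hD1
          _ ≤ 2*K*Rβ := hCαβ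
          _ ≤ 2*K*(K*Qβ) := mul_le_mul_of_nonneg_left hB2 (by positivity)
      have e : c₁/(2*K*K)*(2*K*(K*Qβ)) = c₁*Qβ := by field_simp
      calc c₁/(2*K*K)*P ≤ c₁/(2*K*K)*(2*K*(K*Qβ)) :=
            mul_le_mul_of_nonneg_left hPQ (by positivity)
        _ = c₁*Qβ := e
        _ ≤ _ := hv1
    · calc ⟪opA φ' a - opA φ' b, a - b⟫ ≤ C₁*Qβ := hv2
        _ ≤ C₁*(3*Rβ) := mul_le_mul_of_nonneg_left hB1 hC₁0.le
        _ ≤ C₁*(3*(2*K*Rα)) := by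
            apply mul_le_mul_of_nonneg_left _ hC₁0.le
            exact mul_le_mul_of_nonneg_left hCβα (by norm_num)
        _ ≤ C₁*(3*(2*K*(4*K*P))) := by
            apply mul_le_mul_of_nonneg_left _ hC₁0.le
            apply mul_le_mul_of_nonneg_left _ (by norm_num : (0:ℝ) ≤ 3)
            exact mul_le_mul_of_nonneg_left hD2 (by positivity)
        _ = 24*K*K*C₁*P := by ring
end

section
/- Continuity estimate for the Orlicz operator: let φ satisfy condition (C3). Then there exists a constant C > 0, depending only on the characteristics of φ, such that for all a, b ∈ ℝ^d: |A(a) − A(b)| ≤ C · φ_{|a|}'(|a − b|), where φ_α'(s) = φ'(α + s)·s/(α + s). -/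
open RealInnerProductSpace

/-!
Write `A(a) = ψ(|a|) a` with `ψ(t) = φ'(t)/t`. If `|a| ≤ 2|a - b|`, both `|A(a)|` and `|A(b)|` are
at most `φ'(|a| + |a - b|) ≤ 3 φ'_{|a|}(|a - b|)`, since `φ'` is increasing. Otherwise the segment
from `a` to `b` stays in the shell `|a|/2 ≤ |x| ≤ 3|a|/2`, where `φ''(s) s ≤ C₀ φ'(s)` bounds the
derivative of `A` by a multiple of `φ'(|x|)/|x|`, and this is comparable to `φ'(|a|)/|a|` because
`φ'` is increasing and doubling. The doubling of `φ'` comes from the `Δ₂`-condition on `φ` through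
the convexity bounds `φ(s) ≤ φ'(s) s` and `2s φ'(2s) ≤ φ(4s)`. The mean value inequality concludes.
-/

open Set Filter Topology

namespace ConvexOn

variable {S : Set ℝ} {f f' : ℝ → ℝ} {x y : ℝ}

theorem mul_sub_le_sub_of_hasDerivAt (hf : ConvexOn ℝ S f) (hx : x ∈ S) (hy : y ∈ S)
    (hxy : x < y) {c : ℝ} (hc : HasDerivAt f c x) : c * (y - x) ≤ f y - f x := by
  have h := hf.le_slope_of_hasDerivAt hx hy hxy hc
  rwa [slope_def_field, le_div_iff₀ (sub_pos.2 hxy)] at h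

theorem sub_le_mul_sub_of_hasDerivAt (hf : ConvexOn ℝ S f) (hx : x ∈ S) (hy : y ∈ S)
    (hxy : x < y) {c : ℝ} (hc : HasDerivAt f c y) : f y - f x ≤ c * (y - x) := by
  have h := hf.slope_le_of_hasDerivAt hx hy hxy hc
  rwa [slope_def_field, div_le_iff₀ (sub_pos.2 hxy)] at h

theorem monotoneOn_of_hasDerivAt (hf : ConvexOn ℝ S f)
    (hf' : ∀ x ∈ S, HasDerivAt f (f' x) x) : MonotoneOn f' S := by
  intro x hx y hy hxy
  rcases hxy.eq_or_lt with rfl | hxy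
  · rfl
  exact (hf.le_slope_of_hasDerivAt hx hy hxy (hf' x hx)).trans
    (hf.slope_le_of_hasDerivAt hx hy hxy (hf' y hy))

theorem le_mul_self_of_hasDerivAt (hf : ConvexOn ℝ (Ioi 0) f)
    (hf' : ∀ x ∈ Ioi 0, HasDerivAt f (f' x) x) (h0 : Tendsto f (𝓝[>] 0) (𝓝 0))
    (hx : 0 < x) : f x ≤ f' x * x := by
  have hsec : ∀ᶠ ε in 𝓝[>] 0, f x - f ε ≤ f' x * (x - ε) := by
    filter_upwards [self_mem_nhdsWithin, nhdsWithin_le_nhds (eventually_lt_nhds hx)]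
      with ε hε hεx
    exact hf.sub_le_mul_sub_of_hasDerivAt hε hx hεx (hf' x hx)
  have hlhs : Tendsto (fun ε => f x - f ε) (𝓝[>] 0) (𝓝 (f x - 0)) :=
    tendsto_const_nhds.sub h0
  have hrhs : Tendsto (fun ε => f' x * (x - ε)) (𝓝[>] 0) (𝓝 (f' x * (x - 0))) :=
    ((tendsto_const_nhds.sub tendsto_id).const_mul _).mono_left nhdsWithin_le_nhds
  simpa using le_of_tendsto_of_tendsto hlhs hrhs hsec

theorem deriv_two_mul_le_of_doubling {φ φ' : ℝ → ℝ} {C₀ t : ℝ}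
    (hconv : ConvexOn ℝ (Ioi 0) φ) (hφ' : ∀ s ∈ Ioi 0, HasDerivAt φ (φ' s) s)
    (hφ : ∀ s ∈ Ioi 0, 0 < φ s) (hΔ₂ : ∀ s ≥ 0, φ (2 * s) ≤ C₀ * φ s) (hC₀ : 0 ≤ C₀)
    (ht : 0 < t) (hle : φ t ≤ φ' t * t) : φ' (2 * t) ≤ C₀ ^ 2 / 2 * φ' t := by
  have h2t : (0 : ℝ) < 2 * t := by positivity
  have hslope := hconv.mul_sub_le_sub_of_hasDerivAt h2t (show (0 : ℝ) < 2 * (2 * t) by positivity)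
    (by linarith) (hφ' _ h2t)
  calc φ' (2 * t) = φ' (2 * t) * (2 * (2 * t) - 2 * t) / (2 * t) := by field_simp; ring
    _ ≤ φ (2 * (2 * t)) / (2 * t) := by
        gcongr
        linarith [hφ _ h2t]
    _ ≤ C₀ * (C₀ * φ t) / (2 * t) := by
        gcongr
        exact (hΔ₂ _ h2t.le).trans (mul_le_mul_of_nonneg_left (hΔ₂ t ht.le) hC₀)
    _ ≤ C₀ * (C₀ * (φ' t * t)) / (2 * t) := by gcongr
    _ = C₀ ^ 2 / 2 * φ' t := by field_simp

end ConvexOn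

section Radial

variable {E : Type*} [NormedAddCommGroup E] {ψ ψ' : ℝ → ℝ}

theorem hasFDerivAt_comp_norm_smul [NormedSpace ℝ E] {x : E}
    (hn : DifferentiableAt ℝ (‖·‖) x) (hψ : HasDerivAt ψ (ψ' ‖x‖) ‖x‖) :
    HasFDerivAt (fun y : E => ψ ‖y‖ • y)
      (ψ ‖x‖ • ContinuousLinearMap.id ℝ E + (ψ' ‖x‖ • fderiv ℝ (‖·‖) x).smulRight x) x :=
  (hψ.comp_hasFDerivAt x hn.hasFDerivAt).smul (hasFDerivAt_id x)

theorem norm_smul_id_add_smulRight_fderiv_norm_le [NormedSpace ℝ E] (x : E) (c c' : ℝ) :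
    ‖c • ContinuousLinearMap.id ℝ E + (c' • fderiv ℝ (‖·‖) x).smulRight x‖ ≤
      |c| + |c'| * ‖x‖ := by
  have hn : ‖fderiv ℝ (‖·‖) x‖ ≤ 1 := by
    simpa using norm_fderiv_le_of_lipschitz ℝ (lipschitzWith_one_norm (E := E)) (x₀ := x)
  calc _ ≤ ‖c • ContinuousLinearMap.id ℝ E‖ + ‖(c' • fderiv ℝ (‖·‖) x).smulRight x‖ :=
        norm_add_le _ _
    _ ≤ |c| * 1 + |c'| * 1 * ‖x‖ := by
        rw [norm_smul, ContinuousLinearMap.norm_smulRight_apply, norm_smul, Real.norm_eq_abs,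
          Real.norm_eq_abs]
        gcongr
        exact ContinuousLinearMap.norm_id_le
    _ = _ := by ring

theorem norm_comp_norm_smul_sub_le [InnerProductSpace ℝ E] {a b : E} {M : ℝ}
    (hba : ‖b - a‖ < ‖a‖)
    (hψ : ∀ t ∈ Icc (‖a‖ - ‖b - a‖) (‖a‖ + ‖b - a‖), HasDerivAt ψ (ψ' t) t)
    (hM : ∀ t ∈ Icc (‖a‖ - ‖b - a‖) (‖a‖ + ‖b - a‖), |ψ t| + |ψ' t| * t ≤ M) :
    ‖ψ ‖b‖ • b - ψ ‖a‖ • a‖ ≤ M * ‖b - a‖ := by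
  have hnorm : ∀ x ∈ Metric.closedBall a ‖b - a‖,
      ‖x‖ ∈ Icc (‖a‖ - ‖b - a‖) (‖a‖ + ‖b - a‖) := by
    intro x hx
    rw [Metric.mem_closedBall, dist_eq_norm] at hx
    constructor <;> linarith [norm_sub_norm_le a x, norm_sub_norm_le x a, norm_sub_rev a x]
  refine (convex_closedBall a _).norm_image_sub_le_of_norm_hasFDerivWithin_le
    (fun x hx => (hasFDerivAt_comp_norm_smul ?_ (hψ _ (hnorm x hx))).hasFDerivWithinAt)
    (fun x hx => (norm_smul_id_add_smulRight_fderiv_norm_le x _ _).trans (hM _ (hnorm x hx)))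
    (Metric.mem_closedBall_self (norm_nonneg _)) (by rw [Metric.mem_closedBall, dist_eq_norm])
  have hx0 : x ≠ 0 := norm_pos_iff.1 (by linarith [(hnorm x hx).1])
  exact (contDiffAt_norm ℝ hx0).differentiableAt one_ne_zero

end Radial

section OrliczOperator

variable {φ' : ℝ → ℝ} {d : ℕ}

theorem opA_eq_smul (a : EuclideanSpace ℝ (Fin d)) : opA φ' a = (φ' ‖a‖ / ‖a‖) • a := by
  unfold opA
  split_ifs with h
  · simp [h]
  · rfl

theorem norm_opA_le (hmono : MonotoneOn φ' (Ioi 0)) (hpos : ∀ s ∈ Ioi 0, 0 < φ' s)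
    {c : EuclideanSpace ℝ (Fin d)} {t : ℝ} (ht : 0 < t) (hc : ‖c‖ ≤ t) :
    ‖opA φ' c‖ ≤ φ' t := by
  rcases eq_or_ne c 0 with rfl | hc0
  · simpa [opA] using (hpos t ht).le
  have hcpos : 0 < ‖c‖ := norm_pos_iff.2 hc0
  rw [opA_eq_smul, norm_smul, Real.norm_eq_abs, abs_of_pos (div_pos (hpos _ hcpos) hcpos),
    div_mul_cancel₀ _ hcpos.ne']
  exact hmono hcpos ht hc

theorem norm_opA_sub_le_of_le_two_mul (hmono : MonotoneOn φ' (Ioi 0))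
    (hpos : ∀ s ∈ Ioi 0, 0 < φ' s) {a b : EuclideanSpace ℝ (Fin d)} (hab : a ≠ b)
    (h : ‖a‖ ≤ 2 * ‖a - b‖) :
    ‖opA φ' a - opA φ' b‖ ≤ 6 * (φ' (‖a‖ + ‖a - b‖) * ‖a - b‖ / (‖a‖ + ‖a - b‖)) := by
  have hr : 0 < ‖a - b‖ := norm_pos_iff.2 (sub_ne_zero.2 hab)
  have ht : 0 < ‖a‖ + ‖a - b‖ := by positivity
  have hb : ‖b‖ ≤ ‖a‖ + ‖a - b‖ := by linarith [norm_sub_norm_le b a, norm_sub_rev a b]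
  have hP := hpos _ ht
  calc ‖opA φ' a - opA φ' b‖ ≤ ‖opA φ' a‖ + ‖opA φ' b‖ := norm_sub_le _ _
    _ ≤ 2 * φ' (‖a‖ + ‖a - b‖) := by
        linarith [norm_opA_le hmono hpos ht (le_add_of_nonneg_right hr.le),
          norm_opA_le hmono hpos ht hb]
    _ ≤ 6 * (φ' (‖a‖ + ‖a - b‖) * ‖a - b‖ / (‖a‖ + ‖a - b‖)) := by
        rw [← mul_div_assoc, le_div_iff₀ ht]
        nlinarith

theorem abs_div_add_abs_deriv_div_mul_le {φ'' : ℝ → ℝ} {K D α t : ℝ}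
    (hmono : MonotoneOn φ' (Ioi 0)) (hpos : ∀ s ∈ Ioi 0, 0 < φ' s)
    (hK : |φ'' t * t - φ' t| ≤ K * φ' t) (hD : φ' (2 * α) ≤ D * φ' α) (hα : 0 < α)
    (ht₁ : α / 2 ≤ t) (ht₂ : t ≤ 2 * α) :
    |φ' t / t| + |(φ'' t * t - φ' t * 1) / t ^ 2| * t ≤ 2 * (K + 1) * D * (φ' α / α) := by
  have ht : 0 < t := by linarith
  have h2α : 0 < 2 * α := by positivity
  have hφt := hpos t ht
  have hK1 : 0 ≤ K + 1 := by
    linarith [nonneg_of_mul_nonneg_left ((abs_nonneg _).trans hK) hφt]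
  calc |φ' t / t| + |(φ'' t * t - φ' t * 1) / t ^ 2| * t
      = (φ' t + |φ'' t * t - φ' t|) / t := by
        rw [abs_div, abs_div, abs_of_pos hφt, abs_of_pos ht, abs_of_pos (pow_pos ht 2), mul_one]
        field_simp
    _ ≤ (K + 1) * φ' t / t := by gcongr; linarith
    _ ≤ (K + 1) * φ' (2 * α) / (α / 2) :=
        div_le_div₀ (mul_nonneg hK1 (hpos _ h2α).le)
          (mul_le_mul_of_nonneg_left (hmono ht h2α ht₂) hK1) (by positivity) ht₁
    _ ≤ (K + 1) * (D * φ' α) / (α / 2) := by gcongr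
    _ = 2 * (K + 1) * D * (φ' α / α) := by field_simp

theorem norm_opA_sub_le_of_two_mul_lt {φ'' : ℝ → ℝ} {K D : ℝ}
    (hmono : MonotoneOn φ' (Ioi 0)) (hpos : ∀ s ∈ Ioi 0, 0 < φ' s)
    (hφ'' : ∀ s ∈ Ioi 0, HasDerivAt φ' (φ'' s) s)
    (hK : ∀ s ∈ Ioi 0, |φ'' s * s - φ' s| ≤ K * φ' s)
    (hD : ∀ s ∈ Ioi 0, φ' (2 * s) ≤ D * φ' s) {a b : EuclideanSpace ℝ (Fin d)}
    (h : 2 * ‖a - b‖ < ‖a‖) :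
    ‖opA φ' a - opA φ' b‖ ≤
      3 * (K + 1) * D * (φ' (‖a‖ + ‖a - b‖) * ‖a - b‖ / (‖a‖ + ‖a - b‖)) := by
  set r := ‖a - b‖
  have hr : 0 ≤ r := norm_nonneg _
  have ha : 0 < ‖a‖ := by linarith
  have hba : ‖b - a‖ = r := norm_sub_rev b a
  have hK0 : 0 ≤ K := nonneg_of_mul_nonneg_left ((abs_nonneg _).trans (hK _ ha)) (hpos _ ha)
  have hD0 : 0 ≤ D := by
    have := (hpos _ (show 0 < 2 * ‖a‖ by positivity)).le.trans (hD _ ha)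
    exact nonneg_of_mul_nonneg_left this (hpos _ ha)
  have hshell_pos : ∀ t ∈ Icc (‖a‖ - r) (‖a‖ + r), 0 < t := fun t ht => by linarith [ht.1]
  have hshell : ∀ t ∈ Icc (‖a‖ - r) (‖a‖ + r),
      |φ' t / t| + |(φ'' t * t - φ' t * 1) / t ^ 2| * t ≤ 2 * (K + 1) * D * (φ' ‖a‖ / ‖a‖) :=
    fun t ht => abs_div_add_abs_deriv_div_mul_le hmono hpos (hK t (hshell_pos t ht)) (hD _ ha) ha
      (by linarith [ht.1]) (by linarith [ht.2])
  have hderiv : ∀ t ∈ Icc (‖a‖ - ‖b - a‖) (‖a‖ + ‖b - a‖),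
      HasDerivAt (fun t => φ' t / t) ((φ'' t * t - φ' t * 1) / t ^ 2) t := by
    rw [hba]
    exact fun t ht => (hφ'' t (hshell_pos t ht)).div (hasDerivAt_id' t) (hshell_pos t ht).ne'
  have hmvt := norm_comp_norm_smul_sub_le (by rw [hba]; linarith) hderiv
    (by rw [hba]; exact hshell)
  rw [← opA_eq_smul, ← opA_eq_smul, hba, norm_sub_rev] at hmvt
  have hcompare : φ' ‖a‖ / ‖a‖ ≤ 3 / 2 * (φ' (‖a‖ + r) / (‖a‖ + r)) := by
    rw [div_le_iff₀ ha, mul_div_assoc', div_mul_eq_mul_div, le_div_iff₀ (by positivity)]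
    nlinarith [hmono ha (show 0 < ‖a‖ + r by positivity) (by linarith), hpos _ ha]
  calc ‖opA φ' a - opA φ' b‖ ≤ 2 * (K + 1) * D * (φ' ‖a‖ / ‖a‖) * r := hmvt
    _ ≤ 2 * (K + 1) * D * (3 / 2 * (φ' (‖a‖ + r) / (‖a‖ + r))) * r := by gcongr
    _ = 3 * (K + 1) * D * (φ' (‖a‖ + r) * r / (‖a‖ + r)) := by ring

theorem norm_opA_sub_le {φ'' : ℝ → ℝ} {K D : ℝ}
    (hmono : MonotoneOn φ' (Ioi 0)) (hpos : ∀ s ∈ Ioi 0, 0 < φ' s)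
    (hφ'' : ∀ s ∈ Ioi 0, HasDerivAt φ' (φ'' s) s)
    (hK : ∀ s ∈ Ioi 0, |φ'' s * s - φ' s| ≤ K * φ' s)
    (hD : ∀ s ∈ Ioi 0, φ' (2 * s) ≤ D * φ' s) (a b : EuclideanSpace ℝ (Fin d)) :
    ‖opA φ' a - opA φ' b‖ ≤
      max 6 (3 * (K + 1) * D) * (φ' (‖a‖ + ‖a - b‖) * ‖a - b‖ / (‖a‖ + ‖a - b‖)) := by
  rcases eq_or_ne a b with rfl | hab
  · simp
  have hX : 0 ≤ φ' (‖a‖ + ‖a - b‖) * ‖a - b‖ / (‖a‖ + ‖a - b‖) := by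
    have ht : 0 < ‖a‖ + ‖a - b‖ :=
      add_pos_of_nonneg_of_pos (norm_nonneg _) (norm_pos_iff.2 (sub_ne_zero.2 hab))
    have := hpos _ ht
    positivity
  by_cases h : ‖a‖ ≤ 2 * ‖a - b‖
  · exact (norm_opA_sub_le_of_le_two_mul hmono hpos hab h).trans
      (mul_le_mul_of_nonneg_right (le_max_left _ _) hX)
  · exact (norm_opA_sub_le_of_two_mul_lt hmono hpos hφ'' hK hD (not_le.1 h)).trans
      (mul_le_mul_of_nonneg_right (le_max_right _ _) hX)

end OrliczOperator

theorem stmt13_general (d : ℕ) (φ φ' φ'' : ℝ → ℝ) (c₀ C₀ : ℝ)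
    (hc₀ : 0 < c₀) (hC₀ : 0 < C₀)
    (hcont : ContinuousOn φ (Set.Ici 0))
    (hd1 : ∀ s ∈ Set.Ioi (0:ℝ), HasDerivAt φ (φ' s) s)
    (hd2 : ∀ s ∈ Set.Ioi (0:ℝ), HasDerivAt φ' (φ'' s) s)
    (hconv : ConvexOn ℝ (Set.Ioi 0) φ)
    (hpos : ∀ s ∈ Set.Ioi (0:ℝ), 0 < φ s)
    (hφ0 : φ 0 = 0)
    (hΔ2 : ∀ s ≥ (0:ℝ), φ (2 * s) ≤ C₀ * φ s)
    (hφ'' : ∀ s ∈ Set.Ioi (0:ℝ), c₀ * φ' s ≤ φ'' s * s ∧ φ'' s * s ≤ C₀ * φ' s) :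
    ∃ C : ℝ, 0 < C ∧ ∀ a b : EuclideanSpace ℝ (Fin d),
      ‖opA φ' a - opA φ' b‖ ≤ C * (φ' (‖a‖ + ‖a - b‖) * ‖a - b‖ / (‖a‖ + ‖a - b‖)) := by
  have hmono : MonotoneOn φ' (Ioi 0) := hconv.monotoneOn_of_hasDerivAt hd1
  have hφ_zero : Tendsto φ (𝓝[>] 0) (𝓝 0) := by
    simpa only [ContinuousWithinAt, hφ0] using (hcont 0 self_mem_Ici).mono Ioi_subset_Ici_self
  have hle : ∀ s ∈ Ioi 0, φ s ≤ φ' s * s := fun s hs =>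
    hconv.le_mul_self_of_hasDerivAt hd1 hφ_zero hs
  have hφ'pos : ∀ s ∈ Ioi 0, 0 < φ' s := fun s hs =>
    pos_of_mul_pos_left ((hpos s hs).trans_le (hle s hs)) (le_of_lt hs)
  have hK : ∀ s ∈ Ioi 0, |φ'' s * s - φ' s| ≤ (C₀ + 1) * φ' s := fun s hs => by
    have := hφ'pos s hs
    rw [abs_le]
    constructor <;> nlinarith [hφ'' s hs]
  have hD : ∀ s ∈ Ioi 0, φ' (2 * s) ≤ C₀ ^ 2 / 2 * φ' s := fun s hs =>
    hconv.deriv_two_mul_le_of_doubling hd1 hpos hΔ2 hC₀.le hs (hle s hs)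
  exact ⟨_, lt_max_of_lt_left (by norm_num), norm_opA_sub_le hmono hφ'pos hd2 hK hD⟩

/-- Continuity estimate for the Orlicz operator (Lemma 4.4 (i), second relation):
under condition (C3) there exists `C > 0` depending only on the characteristics
of `φ` such that `|A(a) − A(b)| ≤ C φ_{|a|}'(|a − b|)` for all `a, b ∈ ℝ^d`,
where `φ_α'(s) = φ'(α + s) s/(α + s)`. -/
theorem stmt13 (d : ℕ) (hd : 1 ≤ d) (φ φ' φ'' : ℝ → ℝ) (c₀ C₀ : ℝ)
    (hc₀ : 0 < c₀) (hC₀ : 0 < C₀)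
    (hcont : ContinuousOn φ (Set.Ici 0))
    (hd1 : ∀ s ∈ Set.Ioi (0:ℝ), HasDerivAt φ (φ' s) s)
    (hd2 : ∀ s ∈ Set.Ioi (0:ℝ), HasDerivAt φ' (φ'' s) s)
    (hd2c : ContinuousOn φ'' (Set.Ioi 0))
    (hconv : ConvexOn ℝ (Set.Ioi 0) φ)
    (hpos : ∀ s ∈ Set.Ioi (0:ℝ), 0 < φ s)
    (hφ0 : φ 0 = 0)
    (hlim0 : Filter.Tendsto (fun s => φ s / s) (nhdsWithin 0 (Set.Ioi 0)) (nhds 0))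
    (hliminfty : Filter.Tendsto (fun s => φ s / s) Filter.atTop Filter.atTop)
    (hΔ2 : ∀ s ≥ (0:ℝ), φ (2 * s) ≤ C₀ * φ s)
    (hΔ2conj : ∀ r ≥ (0:ℝ), orliczConj φ (2 * r) ≤ C₀ * orliczConj φ r)
    (hφ'' : ∀ s ∈ Set.Ioi (0:ℝ), c₀ * φ' s ≤ φ'' s * s ∧ φ'' s * s ≤ C₀ * φ' s) :
    ∃ C : ℝ, 0 < C ∧ ∀ a b : EuclideanSpace ℝ (Fin d),
      ‖opA φ' a - opA φ' b‖ ≤ C * (φ' (‖a‖ + ‖a - b‖) * ‖a - b‖ / (‖a‖ + ‖a - b‖)) :=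
  stmt13_general d φ φ' φ'' c₀ C₀ hc₀ hC₀ hcont hd1 hd2 hconv hpos hφ0 hΔ2 hφ''
end

section
/- Equivalence for the shifted Orlicz function: let φ satisfy condition (C3). Then there exist constants c, C > 0, depending only on the characteristics of φ, such that for all a, b ∈ ℝ^d with (a,b) ≠ (0,0): c · (φ'(|a| + |b|)/(|a| + |b|)) · |a − b|² ≤ φ_{|a|}(|a − b|) ≤ C · (φ'(|a| + |b|)/(|a| + |b|)) · |a − b|². -/
/-! The integrand `s ↦ φ'(α+s) s/(α+s)` of `φ_α(t)` is nondecreasing: `φ'` is monotone by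
convexity and nonnegative since `φ(s)/s ≤ φ'(s)`. Hence `φ_α(t)` lies between
`t²/4 · φ'(u)/u` and `t² · φ'(v)/v` with `u = α + t/2` and `v = α + t`. For `α = |a|`,
`t = |a - b|` both `u` and `v` are within a factor `2` of `|a| + |b|`, and on such a range
`φ'(r)/r` varies by a bounded factor because `φ'(2r) ≤ 2^C₀ φ'(r)`, which is the integrated
form of `φ''(s) s ≤ C₀ φ'(s)`. -/

open RealInnerProductSpace

open Set Filter Topology MeasureTheory

lemma ConvexOn.slope_le_of_hasDerivAt_of_continuousWithinAt {f : ℝ → ℝ} {a s f' : ℝ}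
    (hfc : ConvexOn ℝ (Ioi a) f) (hf : ContinuousWithinAt f (Ioi a) a) (hs : a < s)
    (hf' : HasDerivAt f f' s) : slope f a s ≤ f' := by
  have hlim : Tendsto (fun x => slope f x s) (𝓝[>] a) (𝓝 (slope f a s)) := by
    simp only [slope_def_field]
    exact (tendsto_const_nhds.sub hf).div
      (tendsto_const_nhds.sub (tendsto_id.mono_left nhdsWithin_le_nhds)) (sub_ne_zero.2 hs.ne')
  refine le_of_tendsto hlim ?_
  filter_upwards [Ioo_mem_nhdsGT hs] with x hx
  exact hfc.slope_le_of_hasDerivAt hx.1 hs hx.2 hf'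

lemma ConvexOn.monotoneOn_of_hasDerivAt_s14 {f f' : ℝ → ℝ} {S : Set ℝ} (hfc : ConvexOn ℝ S f)
    (hf : ∀ x ∈ S, HasDerivAt f (f' x) x) : MonotoneOn f' S := by
  intro x hx y hy hxy
  rcases hxy.eq_or_lt with rfl | hxy
  · rfl
  exact (hfc.le_slope_of_hasDerivAt hx hy hxy (hf x hx)).trans
    (hfc.slope_le_of_hasDerivAt hx hy hxy (hf y hy))

lemma antitoneOn_mul_rpow_neg_of_hasDerivAt {f f' : ℝ → ℝ} {p : ℝ}
    (hf : ∀ s ∈ Ioi (0:ℝ), HasDerivAt f (f' s) s)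
    (hle : ∀ s ∈ Ioi (0:ℝ), f' s * s ≤ p * f s) :
    AntitoneOn (fun s => f s * s ^ (-p)) (Ioi 0) := by
  have hderiv : ∀ s ∈ Ioi (0:ℝ), HasDerivAt (fun s => f s * s ^ (-p))
      (s ^ (-p - 1) * (f' s * s - p * f s)) s := by
    intro s hs
    have hs0 : s ≠ 0 := ne_of_gt hs
    refine ((hf s hs).mul (Real.hasDerivAt_rpow_const (p := -p) (Or.inl hs0))).congr_deriv ?_
    rw [Real.rpow_sub_one hs0]
    field_simp
    ring
  refine antitoneOn_of_hasDerivWithinAt_nonpos (convex_Ioi 0)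
    (f' := fun s => s ^ (-p - 1) * (f' s * s - p * f s))
    (fun s hs => (hderiv s hs).continuousAt.continuousWithinAt) (fun s hs => ?_) (fun s hs => ?_)
  · rw [interior_Ioi] at hs ⊢
    exact (hderiv s hs).hasDerivWithinAt
  · rw [interior_Ioi] at hs
    exact mul_nonpos_of_nonneg_of_nonpos (Real.rpow_nonneg hs.le _) (sub_nonpos.2 (hle s hs))

lemma le_two_rpow_mul_of_hasDerivAt {f f' : ℝ → ℝ} {p : ℝ}
    (hf : ∀ s ∈ Ioi (0:ℝ), HasDerivAt f (f' s) s)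
    (hle : ∀ s ∈ Ioi (0:ℝ), f' s * s ≤ p * f s) {r : ℝ} (hr : 0 < r) :
    f (2 * r) ≤ 2 ^ p * f r := by
  have h := antitoneOn_mul_rpow_neg_of_hasDerivAt hf hle (mem_Ioi.2 hr)
    (mem_Ioi.2 (by linarith : (0:ℝ) < 2 * r)) (by linarith)
  simp only [Real.mul_rpow zero_le_two hr.le, Real.rpow_neg zero_le_two,
    Real.rpow_neg hr.le] at h
  have hrp : (0:ℝ) < r ^ p := by positivity
  rw [← mul_assoc, mul_le_mul_iff_left₀ (inv_pos.2 hrp), mul_inv_le_iff₀ (by positivity)] at h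
  rwa [mul_comm (2 ^ p)]

lemma MonotoneOn.intervalIntegral_le_sub_mul {f : ℝ → ℝ} {a b : ℝ} (hab : a ≤ b)
    (hf : MonotoneOn f (Icc a b)) : ∫ x in a..b, f x ≤ (b - a) * f b := by
  rw [← uIcc_of_le hab] at hf
  have h := intervalIntegral.integral_mono_on hab (hf.intervalIntegrable (μ := volume))
    intervalIntegrable_const (fun x hx => hf (Icc_subset_uIcc hx) right_mem_uIcc hx.2)
  rwa [intervalIntegral.integral_const, smul_eq_mul] at h

lemma MonotoneOn.half_sub_mul_le_intervalIntegral {f : ℝ → ℝ} {a b : ℝ} (hab : a ≤ b)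
    (hf : MonotoneOn f (Icc a b)) (hfa : 0 ≤ f a) :
    (b - a) / 2 * f ((a + b) / 2) ≤ ∫ x in a..b, f x := by
  set m := (a + b) / 2 with hm_def
  have ham : a ≤ m := by linarith
  have hmb : m ≤ b := by linarith
  have hint : IntervalIntegrable f volume a b := by
    rw [← uIcc_of_le hab] at hf
    exact hf.intervalIntegrable
  have hint₁ : IntervalIntegrable f volume a m :=
    hint.mono_set (by rw [uIcc_of_le ham, uIcc_of_le hab]; exact Icc_subset_Icc le_rfl hmb)
  have hint₂ : IntervalIntegrable f volume m b :=
    hint.mono_set (by rw [uIcc_of_le hmb, uIcc_of_le hab]; exact Icc_subset_Icc ham le_rfl)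
  have hleft : 0 ≤ ∫ x in a..m, f x := intervalIntegral.integral_nonneg ham
    fun x hx => hfa.trans (hf (left_mem_Icc.2 hab) ⟨hx.1, hx.2.trans hmb⟩ hx.1)
  have hright : (b - m) * f m ≤ ∫ x in m..b, f x := by
    have h := intervalIntegral.integral_mono_on hmb intervalIntegrable_const hint₂
      (fun x hx => hf ⟨ham, hmb⟩ ⟨ham.trans hx.1, hx.2⟩ hx.1)
    rwa [intervalIntegral.integral_const, smul_eq_mul] at h
  rw [← intervalIntegral.integral_add_adjacent_intervals hint₁ hint₂,
    show (b - a) / 2 = b - m by ring]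
  linarith

section ShiftedOrlicz

variable {φ' : ℝ → ℝ} {K α β t : ℝ}

lemma monotoneOn_phiShift_integrand (hα : 0 ≤ α) (hmono : MonotoneOn φ' (Ioi 0))
    (hnn : ∀ s > 0, 0 ≤ φ' s) : MonotoneOn (fun s => φ' (α + s) * s / (α + s)) (Ici 0) := by
  intro s hs s' hs' hss'
  simp only [mem_Ici] at hs hs'
  rcases hs.eq_or_lt with rfl | hs
  · rcases hs'.eq_or_lt with rfl | hs'
    · rfl
    · simp only [mul_zero, zero_div]
      exact div_nonneg (mul_nonneg (hnn _ (by linarith)) hs'.le) (by linarith)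
  · show φ' (α + s) * s / (α + s) ≤ φ' (α + s') * s' / (α + s')
    rw [mul_div_assoc, mul_div_assoc]
    refine mul_le_mul (hmono (mem_Ioi.2 (by linarith)) (mem_Ioi.2 (by linarith)) (by linarith))
      ?_ (by positivity) (hnn _ (by linarith))
    rw [div_le_div_iff₀ (by linarith) (by linarith)]
    nlinarith

lemma div_le_two_mul_mul_div_of_le_two_mul (hmono : MonotoneOn φ' (Ioi 0))
    (hnn : ∀ s > 0, 0 ≤ φ' s) (hdbl : ∀ r > 0, φ' (2 * r) ≤ K * φ' r) {u v : ℝ}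
    (hu : 0 < u) (hv : 0 < v) (huv : u ≤ 2 * v) (hvu : v ≤ 2 * u) :
    φ' u / u ≤ 2 * K * (φ' v / v) := by
  have hφu : φ' u ≤ K * φ' v :=
    (hmono (mem_Ioi.2 hu) (mem_Ioi.2 (by linarith)) huv).trans (hdbl v hv)
  calc φ' u / u ≤ K * φ' v / u := by gcongr
    _ ≤ K * φ' v / (v / 2) := by
        gcongr
        · exact (hnn u hu).trans hφu
        · linarith
    _ = 2 * K * (φ' v / v) := by field_simp

lemma phiShift_le (hα : 0 ≤ α) (ht : 0 ≤ t) (hmono : MonotoneOn φ' (Ioi 0))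
    (hnn : ∀ s > 0, 0 ≤ φ' s) : phiShift φ' α t ≤ t ^ 2 * (φ' (α + t) / (α + t)) := by
  have h := ((monotoneOn_phiShift_integrand hα hmono hnn).mono
    Icc_subset_Ici_self).intervalIntegral_le_sub_mul ht
  unfold phiShift
  calc _ ≤ _ := h
    _ = _ := by ring

lemma le_phiShift (hα : 0 ≤ α) (ht : 0 ≤ t) (hmono : MonotoneOn φ' (Ioi 0))
    (hnn : ∀ s > 0, 0 ≤ φ' s) :
    t ^ 2 / 4 * (φ' (α + t / 2) / (α + t / 2)) ≤ phiShift φ' α t := by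
  have h := ((monotoneOn_phiShift_integrand hα hmono hnn).mono
    Icc_subset_Ici_self).half_sub_mul_le_intervalIntegral ht (by simp)
  unfold phiShift
  calc _ = _ := by ring_nf
    _ ≤ _ := h

lemma phiShift_comparable (hK : 0 < K) (hmono : MonotoneOn φ' (Ioi 0))
    (hnn : ∀ s > 0, 0 ≤ φ' s) (hdbl : ∀ r > 0, φ' (2 * r) ≤ K * φ' r)
    (hα : 0 ≤ α) (hβ : 0 ≤ β) (ht : 0 ≤ t) (htαβ : t ≤ α + β)
    (hβαt : β ≤ α + t) :
    1 / (8 * K) * (φ' (α + β) / (α + β)) * t ^ 2 ≤ phiShift φ' α t ∧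
      phiShift φ' α t ≤ 2 * K * (φ' (α + β) / (α + β)) * t ^ 2 := by
  rcases ht.eq_or_lt with rfl | ht
  · simp [phiShift]
  constructor
  · have h := div_le_two_mul_mul_div_of_le_two_mul hmono hnn hdbl (u := α + β)
      (v := α + t / 2) (by linarith) (by linarith) (by linarith) (by linarith)
    refine le_trans ?_ (le_phiShift hα ht.le hmono hnn)
    calc 1 / (8 * K) * (φ' (α + β) / (α + β)) * t ^ 2
        ≤ 1 / (8 * K) * (2 * K * (φ' (α + t / 2) / (α + t / 2))) * t ^ 2 := by gcongr
      _ = _ := by field_simp; ring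
  · have h := div_le_two_mul_mul_div_of_le_two_mul hmono hnn hdbl (u := α + t)
      (v := α + β) (by linarith) (by linarith) (by linarith) (by linarith)
    refine (phiShift_le hα ht.le hmono hnn).trans ?_
    calc t ^ 2 * (φ' (α + t) / (α + t))
        ≤ t ^ 2 * (2 * K * (φ' (α + β) / (α + β))) := by gcongr
      _ = _ := by ring

end ShiftedOrlicz

theorem stmt14_general (d : ℕ) (φ φ' φ'' : ℝ → ℝ) (c₀ C₀ : ℝ)
    (hcont : ContinuousOn φ (Set.Ici 0))
    (hd1 : ∀ s ∈ Set.Ioi (0:ℝ), HasDerivAt φ (φ' s) s)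
    (hd2 : ∀ s ∈ Set.Ioi (0:ℝ), HasDerivAt φ' (φ'' s) s)
    (hconv : ConvexOn ℝ (Set.Ioi 0) φ)
    (hpos : ∀ s ∈ Set.Ioi (0:ℝ), 0 < φ s)
    (hφ0 : φ 0 = 0)
    (hφ'' : ∀ s ∈ Set.Ioi (0:ℝ), c₀ * φ' s ≤ φ'' s * s ∧ φ'' s * s ≤ C₀ * φ' s) :
    ∃ c C : ℝ, 0 < c ∧ 0 < C ∧ ∀ a b : EuclideanSpace ℝ (Fin d),
      ¬(a = 0 ∧ b = 0) →
      c * (φ' (‖a‖ + ‖b‖) / (‖a‖ + ‖b‖)) * ‖a - b‖^2 ≤ phiShift φ' ‖a‖ ‖a - b‖ ∧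
      phiShift φ' ‖a‖ ‖a - b‖ ≤ C * (φ' (‖a‖ + ‖b‖) / (‖a‖ + ‖b‖)) * ‖a - b‖^2 := by
  have hφ'_nonneg : ∀ s > 0, 0 ≤ φ' s := fun s hs => by
    have h := hconv.slope_le_of_hasDerivAt_of_continuousWithinAt
      ((hcont 0 self_mem_Ici).mono Ioi_subset_Ici_self) hs (hd1 s hs)
    rw [slope_def_field, hφ0, sub_zero, sub_zero] at h
    exact (div_pos (hpos s hs) hs).le.trans h
  have hdbl : ∀ r > 0, φ' (2 * r) ≤ 2 ^ C₀ * φ' r := fun r hr =>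
    le_two_rpow_mul_of_hasDerivAt hd2 (fun s hs => (hφ'' s hs).2) hr
  refine ⟨1 / (8 * 2 ^ C₀), 2 * 2 ^ C₀, by positivity, by positivity, fun a b _ => ?_⟩
  exact phiShift_comparable (by positivity) (hconv.monotoneOn_of_hasDerivAt_s14 hd1) hφ'_nonneg hdbl
    (norm_nonneg a) (norm_nonneg b) (norm_nonneg _) (norm_sub_le a b)
    (norm_le_norm_add_norm_sub a b)

/-- Equivalence for the shifted Orlicz function (Lemma 4.4, relation (4.5)):
under condition (C3) there exist constants `c, C > 0` depending only on the
characteristics of `φ` such that for all `a, b ∈ ℝ^d` with `(a,b) ≠ (0,0)`,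
`φ_{|a|}(|a − b|) ≂ (φ'(|a| + |b|)/(|a| + |b|)) |a − b|²`. -/
theorem stmt14 (d : ℕ) (hd : 1 ≤ d) (φ φ' φ'' : ℝ → ℝ) (c₀ C₀ : ℝ)
    (hc₀ : 0 < c₀) (hC₀ : 0 < C₀)
    (hcont : ContinuousOn φ (Set.Ici 0))
    (hd1 : ∀ s ∈ Set.Ioi (0:ℝ), HasDerivAt φ (φ' s) s)
    (hd2 : ∀ s ∈ Set.Ioi (0:ℝ), HasDerivAt φ' (φ'' s) s)
    (hd2c : ContinuousOn φ'' (Set.Ioi 0))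
    (hconv : ConvexOn ℝ (Set.Ioi 0) φ)
    (hpos : ∀ s ∈ Set.Ioi (0:ℝ), 0 < φ s)
    (hφ0 : φ 0 = 0)
    (hlim0 : Filter.Tendsto (fun s => φ s / s) (nhdsWithin 0 (Set.Ioi 0)) (nhds 0))
    (hliminfty : Filter.Tendsto (fun s => φ s / s) Filter.atTop Filter.atTop)
    (hΔ2 : ∀ s ≥ (0:ℝ), φ (2 * s) ≤ C₀ * φ s)
    (hΔ2conj : ∀ r ≥ (0:ℝ), orliczConj φ (2 * r) ≤ C₀ * orliczConj φ r)
    (hφ'' : ∀ s ∈ Set.Ioi (0:ℝ), c₀ * φ' s ≤ φ'' s * s ∧ φ'' s * s ≤ C₀ * φ' s) :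
    ∃ c C : ℝ, 0 < c ∧ 0 < C ∧ ∀ a b : EuclideanSpace ℝ (Fin d),
      ¬(a = 0 ∧ b = 0) →
      c * (φ' (‖a‖ + ‖b‖) / (‖a‖ + ‖b‖)) * ‖a - b‖^2 ≤ phiShift φ' ‖a‖ ‖a - b‖ ∧
      phiShift φ' ‖a‖ ‖a - b‖ ≤ C * (φ' (‖a‖ + ‖b‖) / (‖a‖ + ‖b‖)) * ‖a - b‖^2 :=
  stmt14_general d φ φ' φ'' c₀ C₀ hcont hd1 hd2 hconv hpos hφ0 hφ''
end

section
/- Young-type inequality for shifted Orlicz functions: let φ satisfy condition (C3). Then for every δ > 0 there exists a constant c_δ > 0, depending only on δ and the characteristics of φ, such that for all α ≥ 0 and all r, s ≥ 0: φ_α'(r) · s ≤ c_δ · φ_α(r) + δ · φ_α(s), where φ_α'(r) = φ'(α + r)·r/(α + r). -/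
/-!
Write `f(t) = φ'(α + t) t / (α + t)` for the integrand of `φ_α`. The two-sided bound
`c₀ φ' ≤ φ'' s ≤ C₀ φ'` makes `φ'(s) s^{-c}` nondecreasing and `φ'(s) s^{-C₀}` nonincreasing
(with `c = min c₀ 1`). The second gives `f(r) r ≤ 4·2^{C₀} φ_α(r)`, which settles the case
`s ≤ 2Mr`. The first gives `M^c f(t) ≤ f(Mt)` uniformly in `α`, so for `s > 2Mr` we get
`f(r) s ≤ f(s/(2M)) s ≤ M^{-c} f(s/2) s ≤ 2 M^{-c} φ_α(s)`, which is `≤ δ φ_α(s)` once `M`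
is large.
-/
open RealInnerProductSpace

open Set Filter

section GrowthBounds

variable {g g' : ℝ → ℝ} {p : ℝ}

theorem monotoneOn_mul_rpow_neg_of_mul_le_deriv_mul
    (hd : ∀ s ∈ Ioi (0:ℝ), HasDerivAt g (g' s) s)
    (h : ∀ s ∈ Ioi (0:ℝ), p * g s ≤ g' s * s) :
    MonotoneOn (fun s => g s * s ^ (-p)) (Ioi 0) := by
  have hder : ∀ x ∈ Ioi (0:ℝ), HasDerivAt (fun s => g s * s ^ (-p))
      (g' x * x ^ (-p) + g x * (-p * x ^ (-p - 1))) x := fun x hx =>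
    (hd x hx).mul (Real.hasDerivAt_rpow_const (Or.inl (ne_of_gt hx)))
  refine monotoneOn_of_deriv_nonneg (convex_Ioi 0)
    (fun x hx => (hder x hx).continuousAt.continuousWithinAt) ?_ ?_ <;> rw [interior_Ioi]
  · exact fun x hx => (hder x hx).differentiableAt.differentiableWithinAt
  · intro x hx
    have hxp : x ^ (-p) = x ^ (-p - 1) * x := by
      rw [← Real.rpow_add_one (ne_of_gt hx), sub_add_cancel]
    have hderiv : g' x * x ^ (-p) + g x * (-p * x ^ (-p - 1))
        = x ^ (-p - 1) * (g' x * x - p * g x) := by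
      rw [hxp]; ring
    rw [(hder x hx).deriv, hderiv]
    exact mul_nonneg (Real.rpow_nonneg (le_of_lt hx) _) (sub_nonneg.2 (h x hx))

theorem mul_div_rpow_le_of_mul_le_deriv_mul
    (hd : ∀ s ∈ Ioi (0:ℝ), HasDerivAt g (g' s) s)
    (h : ∀ s ∈ Ioi (0:ℝ), p * g s ≤ g' s * s) {a b : ℝ} (ha : 0 < a) (hab : a ≤ b) :
    g a * (b / a) ^ p ≤ g b := by
  have hb : 0 < b := ha.trans_le hab
  calc g a * (b / a) ^ p = g a * a ^ (-p) * b ^ p := by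
        rw [Real.div_rpow hb.le ha.le, Real.rpow_neg ha.le]; ring
    _ ≤ g b * b ^ (-p) * b ^ p := mul_le_mul_of_nonneg_right
        (monotoneOn_mul_rpow_neg_of_mul_le_deriv_mul hd h ha hb hab) (by positivity)
    _ = g b := by rw [mul_assoc, ← Real.rpow_add hb, neg_add_cancel, Real.rpow_zero, mul_one]

theorem le_mul_div_rpow_of_deriv_mul_le
    (hd : ∀ s ∈ Ioi (0:ℝ), HasDerivAt g (g' s) s)
    (h : ∀ s ∈ Ioi (0:ℝ), g' s * s ≤ p * g s) {a b : ℝ} (ha : 0 < a) (hab : a ≤ b) :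
    g b ≤ g a * (b / a) ^ p := by
  have := mul_div_rpow_le_of_mul_le_deriv_mul (g := -g) (g' := -g') (p := p)
    (fun s hs => (hd s hs).neg) (fun s hs => by simp only [Pi.neg_apply]; linarith [h s hs])
    ha hab
  simp only [Pi.neg_apply] at this
  linarith

/-- By the mean value theorem `g` is positive somewhere in `(0, a)`, and `hgrow` carries that
sign up to `a`. -/
theorem nonneg_of_mul_div_rpow_le {φ : ℝ → ℝ} (hcont : ContinuousOn φ (Ici 0))
    (hd : ∀ s ∈ Ioi (0:ℝ), HasDerivAt φ (g s) s) (hφ0 : φ 0 = 0)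
    (hpos : ∀ s ∈ Ioi (0:ℝ), 0 < φ s)
    (hgrow : ∀ a b : ℝ, 0 < a → a ≤ b → g a * (b / a) ^ p ≤ g b) {a : ℝ} (ha : 0 < a) :
    0 ≤ g a := by
  by_contra! hneg
  obtain ⟨ξ, hξ, hslope⟩ := exists_hasDerivAt_eq_slope φ g ha
    (hcont.mono Icc_subset_Ici_self) (fun x hx => hd x hx.1)
  have hξpos : 0 < g ξ := by
    rw [hslope, hφ0, sub_zero, sub_zero]
    exact div_pos (hpos a ha) ha
  have hratio : 0 < (a / ξ) ^ p := Real.rpow_pos_of_pos (div_pos ha hξ.1) p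
  nlinarith [hgrow ξ a hξ.1 hξ.2.le, mul_pos hξpos hratio]

end GrowthBounds

section ShiftedOrlicz

noncomputable def phiShiftDeriv (φ' : ℝ → ℝ) (α t : ℝ) : ℝ :=
  φ' (α + t) * t / (α + t)

variable {g : ℝ → ℝ} {α c P : ℝ}

theorem phiShiftDeriv_nonneg (hg : ∀ u ∈ Ioi (0:ℝ), 0 ≤ g u) (hα : 0 ≤ α) {t : ℝ}
    (ht : 0 ≤ t) : 0 ≤ phiShiftDeriv g α t := by
  rcases ht.eq_or_lt with rfl | ht
  · simp [phiShiftDeriv]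
  · have hαt : 0 < α + t := by linarith
    exact div_nonneg (mul_nonneg (hg _ hαt) ht.le) hαt.le

theorem monotoneOn_phiShiftDeriv (hg : ∀ u ∈ Ioi (0:ℝ), 0 ≤ g u)
    (hmono : MonotoneOn g (Ioi 0)) (hα : 0 ≤ α) :
    MonotoneOn (phiShiftDeriv g α) (Ici 0) := by
  intro t₁ ht₁ t₂ ht₂ h
  rcases (show (0:ℝ) ≤ t₁ from ht₁).eq_or_lt with rfl | ht₁
  · simpa [phiShiftDeriv] using phiShiftDeriv_nonneg hg hα ht₂
  · have h₁ : 0 < α + t₁ := by linarith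
    have h₂ : 0 < α + t₂ := by linarith
    have hratio : t₁ / (α + t₁) ≤ t₂ / (α + t₂) := by
      rw [div_le_div_iff₀ h₁ h₂]; nlinarith
    calc phiShiftDeriv g α t₁ = g (α + t₁) * (t₁ / (α + t₁)) := mul_div_assoc _ _ _
      _ ≤ g (α + t₂) * (t₂ / (α + t₂)) :=
          mul_le_mul (hmono h₁ h₂ (by linarith)) hratio (by positivity) (hg _ h₂)
      _ = phiShiftDeriv g α t₂ := (mul_div_assoc _ _ _).symm

theorem phiShift_nonneg (hg : ∀ u ∈ Ioi (0:ℝ), 0 ≤ g u) (hα : 0 ≤ α) {r : ℝ} (hr : 0 ≤ r) :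
    0 ≤ phiShift g α r :=
  intervalIntegral.integral_nonneg hr fun _ ht => phiShiftDeriv_nonneg hg hα ht.1

theorem half_mul_phiShiftDeriv_half_le_phiShift (hg : ∀ u ∈ Ioi (0:ℝ), 0 ≤ g u)
    (hmono : MonotoneOn g (Ioi 0)) (hα : 0 ≤ α) {r : ℝ} (hr : 0 ≤ r) :
    r / 2 * phiShiftDeriv g α (r / 2) ≤ phiShift g α r := by
  have hf := monotoneOn_phiShiftDeriv hg hmono hα
  have hint : ∀ x y : ℝ, 0 ≤ x → x ≤ y →
      IntervalIntegrable (phiShiftDeriv g α) MeasureTheory.volume x y := fun x y hx hxy =>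
    (hf.mono fun z hz => hx.trans (uIcc_of_le hxy ▸ hz).1).intervalIntegrable
  have hlower : ∫ _ in r / 2..r, phiShiftDeriv g α (r / 2) ≤ ∫ t in r / 2..r, phiShiftDeriv g α t :=
    intervalIntegral.integral_mono_on (by linarith) intervalIntegrable_const
      (hint _ _ (by linarith) (by linarith))
      fun t ht => hf (by simp only [mem_Ici]; linarith) (by simp only [mem_Ici]; linarith [ht.1])
        ht.1
  have hfirst : 0 ≤ ∫ t in (0:ℝ)..r / 2, phiShiftDeriv g α t := phiShift_nonneg hg hα (by linarith)
  rw [intervalIntegral.integral_const, smul_eq_mul, show r - r / 2 = r / 2 by ring] at hlower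
  change _ ≤ ∫ t in (0:ℝ)..r, phiShiftDeriv g α t
  rw [← intervalIntegral.integral_add_adjacent_intervals
    (hint 0 (r / 2) le_rfl (by linarith)) (hint (r / 2) r (by linarith) (by linarith))]
  exact hlower.trans (le_add_of_nonneg_left hfirst)

theorem phiShiftDeriv_le_two_mul_rpow_mul (hg : ∀ u ∈ Ioi (0:ℝ), 0 ≤ g u)
    (hup : ∀ a b : ℝ, 0 < a → a ≤ b → g b ≤ g a * (b / a) ^ P) (hP : 0 ≤ P) (hα : 0 ≤ α)
    {r : ℝ} (hr : 0 < r) :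
    phiShiftDeriv g α r ≤ 2 * 2 ^ P * phiShiftDeriv g α (r / 2) := by
  have ha : 0 < α + r / 2 := by linarith
  have hab : α + r / 2 ≤ α + r := by linarith
  have hratio : ((α + r) / (α + r / 2)) ^ P ≤ 2 ^ P :=
    Real.rpow_le_rpow (by positivity) ((div_le_iff₀ ha).2 (by linarith)) hP
  calc phiShiftDeriv g α r = g (α + r) * (r / (α + r)) := mul_div_assoc _ _ _
    _ ≤ g (α + r / 2) * 2 ^ P * (r / (α + r / 2)) := by
        gcongr
        · have := hg _ ha; positivity
        · exact (hup _ _ ha hab).trans (by gcongr; exact hg _ ha)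
    _ = 2 * 2 ^ P * phiShiftDeriv g α (r / 2) := by
        unfold phiShiftDeriv; field_simp

theorem phiShiftDeriv_mul_self_le_phiShift (hg : ∀ u ∈ Ioi (0:ℝ), 0 ≤ g u)
    (hmono : MonotoneOn g (Ioi 0))
    (hup : ∀ a b : ℝ, 0 < a → a ≤ b → g b ≤ g a * (b / a) ^ P) (hP : 0 ≤ P) (hα : 0 ≤ α)
    {r : ℝ} (hr : 0 ≤ r) :
    phiShiftDeriv g α r * r ≤ 4 * 2 ^ P * phiShift g α r := by
  rcases hr.eq_or_lt with rfl | hr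
  · simpa using mul_nonneg (by positivity : (0:ℝ) ≤ 4 * 2 ^ P) (phiShift_nonneg hg hα le_rfl)
  calc phiShiftDeriv g α r * r ≤ 2 * 2 ^ P * phiShiftDeriv g α (r / 2) * r := by
        gcongr; exact phiShiftDeriv_le_two_mul_rpow_mul hg hup hP hα hr
    _ = 4 * 2 ^ P * (r / 2 * phiShiftDeriv g α (r / 2)) := by ring
    _ ≤ 4 * 2 ^ P * phiShift g α r := by
        gcongr; exact half_mul_phiShiftDeriv_half_le_phiShift hg hmono hα hr.le

/-- With `q = (α + M t) / (α + t) ∈ [1, M]` the ratio of the two sides is at least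
`M q^{c-1}`, which is `≥ M^c` only because `c ≤ 1`. -/
theorem rpow_mul_phiShiftDeriv_le (hg : ∀ u ∈ Ioi (0:ℝ), 0 ≤ g u)
    (hlow : ∀ a b : ℝ, 0 < a → a ≤ b → g a * (b / a) ^ c ≤ g b) (hc1 : c ≤ 1) (hα : 0 ≤ α)
    {M t : ℝ} (hM : 1 ≤ M) (ht : 0 < t) :
    M ^ c * phiShiftDeriv g α t ≤ phiShiftDeriv g α (M * t) := by
  have ha : 0 < α + t := by linarith
  have hab : α + t ≤ α + M * t := by nlinarith
  have hb : 0 < α + M * t := ha.trans_le hab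
  set q := (α + M * t) / (α + t) with hq
  have hq0 : 0 < q := div_pos hb ha
  have hqM : q ≤ M := (div_le_iff₀ ha).2 (by nlinarith)
  have hMq : M ^ (c - 1) ≤ q ^ (c - 1) := Real.rpow_le_rpow_of_nonpos hq0 hqM (by linarith)
  calc M ^ c * phiShiftDeriv g α t
      = phiShiftDeriv g α t * M * M ^ (c - 1) := by
        rw [Real.rpow_sub_one (by positivity)]; field_simp
    _ ≤ phiShiftDeriv g α t * M * q ^ (c - 1) := by
        have := phiShiftDeriv_nonneg hg hα ht.le
        gcongr
    _ = g (α + t) * q ^ c * (M * t) / (α + M * t) := by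
        rw [Real.rpow_sub_one hq0.ne', hq]; unfold phiShiftDeriv; field_simp
    _ ≤ g (α + M * t) * (M * t) / (α + M * t) := by
        gcongr; exact hlow _ _ ha hab

theorem exists_phiShiftDeriv_mul_le (hg : ∀ u ∈ Ioi (0:ℝ), 0 ≤ g u)
    (hlow : ∀ a b : ℝ, 0 < a → a ≤ b → g a * (b / a) ^ c ≤ g b)
    (hup : ∀ a b : ℝ, 0 < a → a ≤ b → g b ≤ g a * (b / a) ^ P)
    (hc : 0 < c) (hc1 : c ≤ 1) (hP : 0 ≤ P) :
    ∀ δ > (0:ℝ), ∃ cδ : ℝ, 0 < cδ ∧ ∀ α ≥ (0:ℝ), ∀ r ≥ (0:ℝ), ∀ s ≥ (0:ℝ),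
      phiShiftDeriv g α r * s ≤ cδ * phiShift g α r + δ * phiShift g α s := by
  intro δ hδ
  obtain ⟨M, hM1, hMδ⟩ : ∃ M : ℝ, 1 ≤ M ∧ 2 / δ ≤ M ^ c :=
    ((eventually_ge_atTop 1).and ((tendsto_rpow_atTop hc).eventually_ge_atTop (2 / δ))).exists
  have hmono : MonotoneOn g (Ioi 0) := fun a ha b _ hab =>
    (le_mul_of_one_le_right (hg a ha) (Real.one_le_rpow ((one_le_div ha).2 hab) hc.le)).trans
      (hlow a b ha hab)
  refine ⟨8 * 2 ^ P * M, by positivity, fun α hα r hr s hs => ?_⟩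
  have hΦr := phiShift_nonneg hg hα hr
  have hΦs := phiShift_nonneg hg hα hs
  have hfr := phiShiftDeriv_nonneg hg hα hr
  rcases le_or_gt s (2 * M * r) with hsr | hsr
  · calc phiShiftDeriv g α r * s ≤ 2 * M * (phiShiftDeriv g α r * r) := by nlinarith
      _ ≤ 2 * M * (4 * 2 ^ P * phiShift g α r) := by
          gcongr 2 * M * ?_; exact phiShiftDeriv_mul_self_le_phiShift hg hmono hup hP hα hr
      _ = 8 * 2 ^ P * M * phiShift g α r := by ring
      _ ≤ 8 * 2 ^ P * M * phiShift g α r + δ * phiShift g α s :=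
          le_add_of_nonneg_right (mul_nonneg hδ.le hΦs)
  · have hs0 : 0 < s := lt_of_le_of_lt (by positivity) hsr
    have hrt : r ≤ s / (2 * M) := (le_div_iff₀ (by positivity)).2 (by linarith)
    have hMt : M * (s / (2 * M)) = s / 2 := by field_simp
    have hgain : M ^ c * (phiShiftDeriv g α r * s) ≤ 2 * phiShift g α s :=
      calc M ^ c * (phiShiftDeriv g α r * s)
          ≤ M ^ c * phiShiftDeriv g α (s / (2 * M)) * s := by
            rw [← mul_assoc]
            gcongr
            exact monotoneOn_phiShiftDeriv hg hmono hα hr (by simp only [mem_Ici]; positivity) hrt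
        _ ≤ phiShiftDeriv g α (s / 2) * s := by
            rw [← hMt]
            gcongr
            exact rpow_mul_phiShiftDeriv_le hg hlow hc1 hα hM1 (by positivity)
        _ = 2 * (s / 2 * phiShiftDeriv g α (s / 2)) := by ring
        _ ≤ 2 * phiShift g α s := by
            gcongr; exact half_mul_phiShiftDeriv_half_le_phiShift hg hmono hα hs
    have hsmall : phiShiftDeriv g α r * s ≤ δ * phiShift g α s := by
      have h2 : 2 ≤ δ * M ^ c := by rwa [div_le_iff₀ hδ, mul_comm] at hMδ
      refine le_of_mul_le_mul_left (hgain.trans ?_) (by positivity : 0 < M ^ c)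
      nlinarith
    exact hsmall.trans (le_add_of_nonneg_left (mul_nonneg (by positivity) hΦr))

end ShiftedOrlicz

theorem stmt15_general (φ φ' φ'' : ℝ → ℝ) (c₀ C₀ : ℝ)
    (hc₀ : 0 < c₀) (hC₀ : 0 < C₀)
    (hcont : ContinuousOn φ (Set.Ici 0))
    (hd1 : ∀ s ∈ Set.Ioi (0:ℝ), HasDerivAt φ (φ' s) s)
    (hd2 : ∀ s ∈ Set.Ioi (0:ℝ), HasDerivAt φ' (φ'' s) s)
    (hpos : ∀ s ∈ Set.Ioi (0:ℝ), 0 < φ s)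
    (hφ0 : φ 0 = 0)
    (hφ'' : ∀ s ∈ Set.Ioi (0:ℝ), c₀ * φ' s ≤ φ'' s * s ∧ φ'' s * s ≤ C₀ * φ' s) :
    ∀ δ > (0:ℝ), ∃ cδ : ℝ, 0 < cδ ∧ ∀ α ≥ (0:ℝ), ∀ r ≥ (0:ℝ), ∀ s ≥ (0:ℝ),
      (φ' (α + r) * r / (α + r)) * s ≤ cδ * phiShift φ' α r + δ * phiShift φ' α s := by
  have hφ'_nonneg : ∀ u ∈ Ioi (0:ℝ), 0 ≤ φ' u := fun u hu =>
    nonneg_of_mul_div_rpow_le hcont hd1 hφ0 hpos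
      (fun a b => mul_div_rpow_le_of_mul_le_deriv_mul hd2 fun s hs => (hφ'' s hs).1) hu
  have hlow : ∀ a b : ℝ, 0 < a → a ≤ b → φ' a * (b / a) ^ min c₀ 1 ≤ φ' b :=
    fun a b => mul_div_rpow_le_of_mul_le_deriv_mul hd2 fun s hs =>
      (mul_le_mul_of_nonneg_right (min_le_left c₀ 1) (hφ'_nonneg s hs)).trans (hφ'' s hs).1
  have hup : ∀ a b : ℝ, 0 < a → a ≤ b → φ' b ≤ φ' a * (b / a) ^ C₀ :=
    fun a b => le_mul_div_rpow_of_deriv_mul_le hd2 fun s hs => (hφ'' s hs).2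
  exact exists_phiShiftDeriv_mul_le hφ'_nonneg hlow hup (lt_min hc₀ one_pos) (min_le_right _ _)
    hC₀.le

/-- Young-type inequality for shifted Orlicz functions (Lemma 4.4 (ii)):
under condition (C3), for every `δ > 0` there exists `c_δ > 0` depending only on
`δ` and the characteristics of `φ` such that for all `α ≥ 0` and `r, s ≥ 0`,
`φ_α'(r) s ≤ c_δ φ_α(r) + δ φ_α(s)`, where `φ_α'(r) = φ'(α + r) r/(α + r)`. -/
theorem stmt15 (φ φ' φ'' : ℝ → ℝ) (c₀ C₀ : ℝ)
    (hc₀ : 0 < c₀) (hC₀ : 0 < C₀)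
    (hcont : ContinuousOn φ (Set.Ici 0))
    (hd1 : ∀ s ∈ Set.Ioi (0:ℝ), HasDerivAt φ (φ' s) s)
    (hd2 : ∀ s ∈ Set.Ioi (0:ℝ), HasDerivAt φ' (φ'' s) s)
    (hd2c : ContinuousOn φ'' (Set.Ioi 0))
    (hconv : ConvexOn ℝ (Set.Ioi 0) φ)
    (hpos : ∀ s ∈ Set.Ioi (0:ℝ), 0 < φ s)
    (hφ0 : φ 0 = 0)
    (hlim0 : Filter.Tendsto (fun s => φ s / s) (nhdsWithin 0 (Set.Ioi 0)) (nhds 0))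
    (hliminfty : Filter.Tendsto (fun s => φ s / s) Filter.atTop Filter.atTop)
    (hΔ2 : ∀ s ≥ (0:ℝ), φ (2 * s) ≤ C₀ * φ s)
    (hΔ2conj : ∀ r ≥ (0:ℝ), orliczConj φ (2 * r) ≤ C₀ * orliczConj φ r)
    (hφ'' : ∀ s ∈ Set.Ioi (0:ℝ), c₀ * φ' s ≤ φ'' s * s ∧ φ'' s * s ≤ C₀ * φ' s) :
    ∀ δ > (0:ℝ), ∃ cδ : ℝ, 0 < cδ ∧ ∀ α ≥ (0:ℝ), ∀ r ≥ (0:ℝ), ∀ s ≥ (0:ℝ),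
      (φ' (α + r) * r / (α + r)) * s ≤ cδ * phiShift φ' α r + δ * phiShift φ' α s :=
  stmt15_general φ φ' φ'' c₀ C₀ hc₀ hC₀ hcont hd1 hd2 hpos hφ0 hφ''
end
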